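/- arXiv:1807.06971 — 8 statements merged into one kernel-verified Lean document; each statement's English description precedes it below -/
import Mathlib

section
/- For every real number a ≥ 2, the graph of the sequence n ↦ ⌊n^a⌋ contains no arithmetic progression of length 3; that is, there do not exist positive integers d, e such that the three points (e, ⌊e^a⌋), (e+d, ⌊(e+d)^a⌋), (e+2d, ⌊(e+2d)^a⌋) form an arithmetic progression in ℕ², i.e., ⌊(e+2d)^a⌋ + ⌊e^a⌋ = 2⌊(e+d)^a⌋. -/
/-!
For `a ≥ 2` the second difference of `t ↦ t ^ a` with step `d ≥ 1` is at least `2 d ^ a ≥ 2`: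
writing `t ^ a = (t ^ 2) ^ (a / 2)`, convexity of `s ↦ s ^ (a / 2)` at the squares `x ^ 2`,
`(x + 2d) ^ 2`, whose mean is `(x + d) ^ 2 + d ^ 2`, and superadditivity of the same power give
`x ^ a + (x + 2d) ^ a ≥ 2 (x + d) ^ a + 2 d ^ a`. Taking floors loses less than `2`, so the
floors cannot be in arithmetic progression.
-/

namespace Real

lemma two_mul_rpow_midpoint_le {p x y : ℝ} (hp : 1 ≤ p) (hx : 0 ≤ x) (hy : 0 ≤ y) :
    2 * ((x + y) / 2) ^ p ≤ x ^ p + y ^ p := by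
  have h := (convexOn_rpow hp).2 (Set.mem_Ici.2 hx) (Set.mem_Ici.2 hy)
    (by norm_num : (0 : ℝ) ≤ 1 / 2) (by norm_num : (0 : ℝ) ≤ 1 / 2) (add_halves 1)
  simp only [smul_eq_mul] at h
  rw [show (x + y) / 2 = 1 / 2 * x + 1 / 2 * y by ring]
  linarith

lemma sq_rpow_half {x : ℝ} (hx : 0 ≤ x) (a : ℝ) : (x ^ 2) ^ (a / 2) = x ^ a := by
  rw [← rpow_natCast, ← rpow_mul hx, Nat.cast_ofNat, mul_div_cancel₀ a two_ne_zero]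

lemma two_mul_rpow_add_two_mul_rpow_le {a x d : ℝ} (ha : 2 ≤ a) (hx : 0 ≤ x) (hd : 0 ≤ d) :
    2 * (x + d) ^ a + 2 * d ^ a ≤ x ^ a + (x + 2 * d) ^ a := by
  have hp : 1 ≤ a / 2 := by linarith
  have convex := two_mul_rpow_midpoint_le hp (sq_nonneg x) (sq_nonneg (x + 2 * d))
  have superadd := add_rpow_le_rpow_add (sq_nonneg (x + d)) (sq_nonneg d) hp
  rw [show (x ^ 2 + (x + 2 * d) ^ 2) / 2 = (x + d) ^ 2 + d ^ 2 by ring,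
    sq_rpow_half hx, sq_rpow_half (by linarith)] at convex
  rw [sq_rpow_half (by linarith), sq_rpow_half hd] at superadd
  linarith

end Real

lemma Int.two_mul_floor_lt_floor_add_floor {x y z : ℝ} (h : 2 * y + 2 ≤ x + z) :
    2 * ⌊y⌋ < ⌊x⌋ + ⌊z⌋ := by
  have hx := Int.sub_one_lt_floor x
  have hz := Int.sub_one_lt_floor z
  have hy := Int.floor_le y
  exact_mod_cast (by linarith : (2 * ⌊y⌋ : ℝ) < ⌊x⌋ + ⌊z⌋)

theorem stmt_0 (a : ℝ) (ha : 2 ≤ a) :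
    ¬ ∃ d e : ℕ, 0 < d ∧ 0 < e ∧
      ⌊((e : ℝ) + 2 * d) ^ a⌋ + ⌊(e : ℝ) ^ a⌋ = 2 * ⌊((e : ℝ) + d) ^ a⌋ := by
  rintro ⟨d, e, hd, -, heq⟩
  have hd1 : (1 : ℝ) ≤ d := by exact_mod_cast hd
  have second_difference :=
    Real.two_mul_rpow_add_two_mul_rpow_le ha (Nat.cast_nonneg e) (Nat.cast_nonneg d)
  have one_le : 1 ≤ (d : ℝ) ^ a := Real.one_le_rpow hd1 (by linarith)
  have := Int.two_mul_floor_lt_floor_add_floor (by linarith :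
    2 * ((e : ℝ) + d) ^ a + 2 ≤ (e : ℝ) ^ a + ((e : ℝ) + 2 * d) ^ a)
  omega
end

section
/- Theorem (via van der Waerden): Let k ≥ 3 and r ≥ 1 be integers, f : ℝ⁺ → ℝ twice differentiable, R : ℕ → ℝ with M₁ ≤ R(n) ≤ M₂ for all n, and let a : ℕ → ℕ be strictly increasing with a(n) = f(n) + R(n) for all n. If limsup_{x→∞} |f''(x)| < ((k-1)/(W(r,k)-1))² · (1/(k-2) - 2(M₂-M₁)/r), then there exist positive integers d, e such that {a(e + dj)}_{j=0}^{k-1} is an arithmetic progression of length k; in particular the graph of a contains an arithmetic progression of length k. -/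
/-!
Colour `n` by `a n mod r`. Van der Waerden's theorem yields, arbitrarily far out, a progression
`e + j d` (`j < k`) with `(k - 1) d < W` on which `a` is constant mod `r`, so every step
`a (e + (j + 1) d) - a (e + j d)` is divisible by `r`. Each step is `f (x + d) - f x` at
`x = e + j d` up to an error of at most `M₂ - M₁`, and by the mean value theorem, applied to `f'`
and then to `x ↦ f (x + d) - f x`, this moves by at most `B d · j d ≤ (k - 2) d² B` as `x` goes
from `e` to `e + j d`. The bound on `B` gives `(k - 2) d² B + 2 (M₂ - M₁) < r`, so any two steps,
being congruent mod `r` and closer than `r`, are equal.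
-/

/-- `vdwProp r k N` : every `r`-coloring of any `N` consecutive integers contains a
monochromatic arithmetic progression of length `k`. -/
def vdwProp (r k N : ℕ) : Prop :=
  ∀ χ : ℕ → Fin r, ∀ n₀ : ℕ, ∃ e d : ℕ, 0 < d ∧ n₀ ≤ e ∧ e + (k - 1) * d < n₀ + N ∧
    ∀ j, j < k → χ (e + j * d) = χ e

open Set
open scoped fwdDiff

theorem abs_fwdDiff_sub_fwdDiff_le {f f' f'' : ℝ → ℝ} {c B h x y : ℝ}
    (hf : ∀ x, c ≤ x → HasDerivAt f (f' x) x) (hf' : ∀ x, c ≤ x → HasDerivAt f' (f'' x) x)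
    (hB : ∀ x, c ≤ x → |f'' x| ≤ B) (hh : 0 ≤ h) (hx : c ≤ x) (hy : c ≤ y) :
    |Δ_[h] f y - Δ_[h] f x| ≤ B * h * |y - x| := by
  have hf'_lip : ∀ x y, c ≤ x → c ≤ y → |f' y - f' x| ≤ B * |y - x| := fun x y hx hy ↦ by
    simpa using (convex_Ici c).norm_image_sub_le_of_norm_hasDerivWithin_le
      (fun z hz ↦ (hf' z hz).hasDerivWithinAt) (fun z hz ↦ by simpa using hB z hz)
      (mem_Ici.2 hx) (mem_Ici.2 hy)
  have hΔ : ∀ z ∈ Ici c, HasDerivWithinAt (Δ_[h] f) (f' (z + h) - f' z) (Ici c) z :=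
    fun z hz ↦ (((hf (z + h) (by linarith [mem_Ici.1 hz])).comp_add_const z h).sub
      (hf z hz)).hasDerivWithinAt
  have hΔ' : ∀ z ∈ Ici c, ‖f' (z + h) - f' z‖ ≤ B * h := fun z hz ↦ by
    simpa [abs_of_nonneg hh] using hf'_lip z (z + h) hz (by linarith [mem_Ici.1 hz])
  simpa using (convex_Ici c).norm_image_sub_le_of_norm_hasDerivWithin_le hΔ hΔ'
    (mem_Ici.2 hx) (mem_Ici.2 hy)

theorem abs_fwdDiff_add_sub_fwdDiff_le_of_eq_add {f f' f'' : ℝ → ℝ} {u R : ℕ → ℝ}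
    {c B M₁ M₂ : ℝ} (hf : ∀ x, c ≤ x → HasDerivAt f (f' x) x)
    (hf' : ∀ x, c ≤ x → HasDerivAt f' (f'' x) x) (hB : ∀ x, c ≤ x → |f'' x| ≤ B)
    (hu : ∀ n : ℕ, c ≤ n → u n = f n + R n) (hR : ∀ n : ℕ, c ≤ n → M₁ ≤ R n ∧ R n ≤ M₂)
    {p : ℕ} (hp : c ≤ p) (h l : ℕ) :
    |Δ_[h] u (p + l) - Δ_[h] u p| ≤ B * h * l + 2 * (M₂ - M₁) := by
  have hc {n : ℕ} (hn : p ≤ n) : c ≤ n := hp.trans (by exact_mod_cast hn)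
  have hfΔ := abs_fwdDiff_sub_fwdDiff_le hf hf' hB h.cast_nonneg hp (hc (p.le_add_right l))
  have := hR p hp
  have := hR (p + h) (hc (by omega))
  have := hR (p + l) (hc (by omega))
  have := hR (p + l + h) (hc (by omega))
  simp only [fwdDiff] at hfΔ ⊢
  rw [hu p hp, hu (p + h) (hc (by omega)), hu (p + l) (hc (by omega)),
    hu (p + l + h) (hc (by omega))]
  push_cast at hfΔ ⊢
  rw [add_sub_cancel_left, abs_of_nonneg (Nat.cast_nonneg (α := ℝ) l)] at hfΔ
  rw [abs_le] at hfΔ ⊢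
  constructor <;> linarith

theorem sub_two_mul_sq_mul_add_two_mul_lt {k r W d B m : ℝ} (hk : 3 ≤ k) (hr : 1 ≤ r)
    (hm : 0 ≤ m) (hB0 : 0 ≤ B) (hd : 0 < d) (hdW : (k - 1) * d ≤ W - 1)
    (hB : B < ((k - 1) / (W - 1)) ^ 2 * (1 / (k - 2) - 2 * m / r)) :
    (k - 2) * (d ^ 2 * B) + 2 * m < r := by
  set Y := 1 / (k - 2) - 2 * m / r
  have hW : 0 < W - 1 := by nlinarith
  have hdk : d ^ 2 * ((k - 1) / (W - 1)) ^ 2 ≤ 1 := by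
    rw [← mul_pow]
    refine pow_le_one₀ (mul_nonneg hd.le (div_nonneg (by linarith) hW.le)) ?_
    rw [mul_div_assoc', div_le_one hW]
    linarith
  have hY : 0 < Y := pos_of_mul_pos_right (hB0.trans_lt hB) (by positivity)
  have hdB : d ^ 2 * B < Y := calc
    d ^ 2 * B < d ^ 2 * (((k - 1) / (W - 1)) ^ 2 * Y) := by gcongr
    _ ≤ Y := by rw [← mul_assoc]; exact mul_le_of_le_one_left hY.le hdk
  have hYr : (k - 2) * Y * r + 2 * m * (k - 2) = r := by
    have : k - 2 ≠ 0 := by linarith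
    have : r ≠ 0 := by linarith
    simp only [Y]; field_simp; ring
  have hk2 : 0 < k - 2 := by linarith
  have h1 : (k - 2) * (d ^ 2 * B) * r < (k - 2) * Y * r := by gcongr
  have h2 : (k - 2) * (d ^ 2 * B) ≤ (k - 2) * (d ^ 2 * B) * r :=
    le_mul_of_one_le_right (by positivity) hr
  have h3 : 2 * m ≤ 2 * m * (k - 2) := le_mul_of_one_le_right (by positivity) (by linarith)
  linarith

theorem vdwProp.exists_modEq {r k W : ℕ} (hW : vdwProp r k W) (hr : 1 ≤ r) (a : ℕ → ℕ)
    (n₀ : ℕ) : ∃ e d, 0 < d ∧ n₀ ≤ e ∧ (k - 1) * d < W ∧ ∀ j < k, a (e + j * d) ≡ a e [MOD r] := by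
  obtain ⟨e, d, hd, he, hlt, hcol⟩ := hW (fun n ↦ ⟨a n % r, Nat.mod_lt _ hr⟩) n₀
  exact ⟨e, d, hd, he, by omega, fun j hj ↦ congrArg Fin.val (hcol j hj)⟩

theorem add_eq_add_of_modEq_of_abs_fwdDiff_sub_lt {a : ℕ → ℕ} {r p q h : ℕ}
    (hp : a p ≡ a (p + h) [MOD r]) (hq : a q ≡ a (q + h) [MOD r])
    (hlt : |Δ_[h] (fun n ↦ (a n : ℝ)) q - Δ_[h] (fun n ↦ (a n : ℝ)) p| < r) :
    a (q + h) + a p = a q + a (p + h) := by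
  have hdvd : (r : ℤ) ∣ ((a (q + h) : ℤ) - a q) - ((a (p + h) : ℤ) - a p) :=
    dvd_sub (Nat.modEq_iff_dvd.1 hq) (Nat.modEq_iff_dvd.1 hp)
  have hlt' : |((a (q + h) : ℤ) - a q) - ((a (p + h) : ℤ) - a p)| < r := by
    simp only [fwdDiff] at hlt
    exact_mod_cast hlt
  have hzero := Int.eq_zero_of_abs_lt_dvd hdvd hlt'
  omega

theorem stmt_8 (k r W : ℕ) (hk : 3 ≤ k) (hr : 1 ≤ r)
    (hW : IsLeast {N | vdwProp r k N} W)
    (f f' f'' : ℝ → ℝ)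
    (hf : ∀ x : ℝ, 0 < x → HasDerivAt f (f' x) x)
    (hf' : ∀ x : ℝ, 0 < x → HasDerivAt f' (f'' x) x)
    (M₁ M₂ : ℝ) (R : ℕ → ℝ) (hR : ∀ n : ℕ, 1 ≤ n → M₁ ≤ R n ∧ R n ≤ M₂)
    (a : ℕ → ℕ) (ha : StrictMono a)
    (haf : ∀ n : ℕ, 1 ≤ n → (a n : ℝ) = f n + R n)
    (hlim : ∃ B : ℝ,
      B < (((k : ℝ) - 1) / ((W : ℝ) - 1)) ^ 2 *
          (1 / ((k : ℝ) - 2) - 2 * (M₂ - M₁) / (r : ℝ)) ∧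
      ∀ᶠ x in Filter.atTop, |f'' x| ≤ B) :
    ∃ e d : ℕ, 0 < e ∧ 0 < d ∧ ∃ D : ℕ, 0 < D ∧
      ∀ j, j + 1 < k → a (e + (j + 1) * d) = a (e + j * d) + D := by
  obtain ⟨B, hB, hBev⟩ := hlim
  obtain ⟨X₀, hX₀⟩ := Filter.eventually_atTop.mp hBev
  set c := max X₀ 1
  have hc : 1 ≤ c := le_max_right _ _
  have hB0 : 0 ≤ B := (abs_nonneg _).trans (hX₀ c (le_max_left _ _))
  have hnat {n : ℕ} (hn : c ≤ n) : 1 ≤ n := by exact_mod_cast hc.trans hn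
  obtain ⟨e, d, hd, hce, hdW, hmod⟩ := vdwProp.exists_modEq hW.1 hr a ⌈c⌉₊
  replace hce : c ≤ e := Nat.ceil_le.1 hce
  have hdW' : ((k : ℝ) - 1) * d ≤ W - 1 := by
    have : (k - 1) * d + 1 ≤ W := hdW
    rify [show 1 ≤ k by omega] at this
    linarith
  have hbudget := sub_two_mul_sq_mul_add_two_mul_lt (by exact_mod_cast hk) (by exact_mod_cast hr)
    (by linarith [hR 1 le_rfl]) hB0 (by exact_mod_cast hd) hdW' hB
  refine ⟨e, d, hnat hce, hd, a (e + d) - a e, Nat.sub_pos_of_lt (ha (by omega)), fun j hj ↦ ?_⟩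
  have hstep : e + (j + 1) * d = e + j * d + d := by ring
  have hdiff := abs_fwdDiff_add_sub_fwdDiff_le_of_eq_add (u := fun n ↦ (a n : ℝ))
    (fun x hx ↦ hf x (by linarith)) (fun x hx ↦ hf' x (by linarith))
    (fun x hx ↦ hX₀ x (le_of_max_le_left hx)) (fun n hn ↦ haf n (hnat hn))
    (fun n hn ↦ hR n (hnat hn)) hce d (j * d)
  have hjd : B * d * (j * d : ℕ) ≤ ((k : ℝ) - 2) * ((d : ℝ) ^ 2 * B) := by
    have : (j : ℝ) + 2 ≤ k := by exact_mod_cast (show j + 2 ≤ k by omega)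
    push_cast
    nlinarith [mul_le_mul_of_nonneg_right this (mul_nonneg (sq_nonneg (d : ℝ)) hB0)]
  have hsteps := add_eq_add_of_modEq_of_abs_fwdDiff_sub_lt (by simpa using (hmod 1 (by omega)).symm)
    ((hmod j (by omega)).trans (hstep ▸ hmod (j + 1) hj).symm) (by linarith)
  have hmono := ha.monotone (Nat.le_add_right e d)
  rw [hstep]
  omega
end

section
/- Let f : ℕ → ℝ⁺ satisfy Δf(n) > 0 and Δ²f(n) ≥ 0 for all n (where Δf(n) = f(n+1) - f(n)), and suppose sup_{x>0} N(x)²/x = ∞, where N(x) = |{n ∈ ℕ : f(n) ≤ x}|. Then for every integer k > 0 there exists n₀ > 0 such that ⌊Δf(n)⌋ is constant for n₀ ≤ n ≤ n₀ + k. -/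
/-!
If the conclusion fails for some `k`, then the floors `⌊Δf n⌋`, which are nondecreasing by
convexity, must strictly increase across every window `[n, n + k]` with `n > 0`. Hence
`Δf n ≥ n / k - 2`, so `f` grows at least like `n² / (4k)` up to a constant, and
`N(x) ≤ 1 + max {n | f n ≤ x}` makes `N(x)² / x` bounded, contradicting the hypothesis.
-/

open Set in
theorem Set.exists_mem_ncard_le_succ {S : Set ℕ} (hS : S.ncard ≠ 0) :
    ∃ j ∈ S, S.ncard ≤ j + 1 := by
  have hbdd : BddAbove S := (finite_of_ncard_ne_zero hS).bddAbove
  refine ⟨sSup S, Nat.sSup_mem (nonempty_of_ncard_ne_zero hS) hbdd, ?_⟩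
  calc S.ncard ≤ (↑(Finset.range (sSup S + 1)) : Set ℕ).ncard :=
        ncard_le_ncard (fun n hn => by simpa [Nat.lt_succ_iff] using le_csSup hbdd hn)
          (Finset.finite_toSet _)
    _ = sSup S + 1 := by rw [ncard_coe_finset, Finset.card_range]

theorem Monotone.add_div_le_of_lt_add {g : ℕ → ℤ} {k : ℕ} (hg : Monotone g)
    (hk : ∀ n, g n < g (n + k)) (n : ℕ) : g 0 + (n / k : ℕ) ≤ g n := by
  have hblock : ∀ m : ℕ, g 0 + m ≤ g (m * k) := by
    intro m
    induction m with
    | zero => simp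
    | succ m ih =>
      have hstep := hk (m * k)
      rw [Nat.succ_mul]; push_cast; omega
  exact (hblock _).trans (hg (Nat.div_mul_le_self n k))

theorem div_sub_two_le_of_floor_lt {d : ℕ → ℝ} {k : ℕ} (hd : Monotone d) (hd0 : 0 ≤ d 0)
    (hk : 0 < k) (hjump : ∀ n, 0 < n → ⌊d n⌋ < ⌊d (n + k)⌋) (n : ℕ) :
    (1 / k : ℝ) * n - 2 ≤ d n := by
  cases n with
  | zero => simp only [CharP.cast_eq_zero, mul_zero]; linarith
  | succ m =>
    have hfloor : ((m / k : ℕ) : ℤ) ≤ ⌊d (m + 1)⌋ := by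
      have hg : Monotone fun n => ⌊d (n + 1)⌋ := fun a b hab => Int.floor_mono (hd (by omega))
      have h := hg.add_div_le_of_lt_add
        (fun n => by simpa only [Nat.add_right_comm] using hjump (n + 1) n.succ_pos) m
      have h0 : 0 ≤ ⌊d (0 + 1)⌋ := Int.floor_nonneg.mpr (hd0.trans (hd (Nat.zero_le _)))
      omega
    have hdiv : (m : ℝ) / k - 1 < (m / k : ℕ) := by
      rw [sub_lt_iff_lt_add, div_lt_iff₀ (by positivity)]
      exact_mod_cast (Nat.succ_mul _ _ ▸ Nat.lt_div_mul_add hk : m < (m / k + 1) * k)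
    have hinv : (1 : ℝ) / k ≤ 1 := by
      rw [div_le_one (by positivity)]; exact_mod_cast hk
    have hle : ((m / k : ℕ) : ℝ) ≤ d (m + 1) := by exact_mod_cast Int.le_floor.mp hfloor
    push_cast
    rw [mul_add, mul_one, one_div_mul_eq_div]
    linarith

theorem quadratic_lower_bound_of_linear_diff {f : ℕ → ℝ} {c b : ℝ}
    (h : ∀ n : ℕ, c * n - b ≤ f (n + 1) - f n) (n : ℕ) :
    f 0 + c * (n * (n - 1) / 2) - b * n ≤ f n := by
  induction n with
  | zero => simp
  | succ n ih =>
    have hstep := h n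
    push_cast
    linarith

theorem sq_lower_bound_of_linear_diff {f : ℕ → ℝ} {c b : ℝ} (hc : 0 < c) (hf0 : 0 ≤ f 0)
    (h : ∀ n : ℕ, c * n - b ≤ f (n + 1) - f n) (n : ℕ) :
    c / 4 * n ^ 2 - (c / 2 + b) ^ 2 / c ≤ f n := by
  have hsum := quadratic_lower_bound_of_linear_diff h n
  have hsq : 0 ≤ (c * n / 2 - (c / 2 + b)) ^ 2 / c := by positivity
  have hsq_eq : (c * n / 2 - (c / 2 + b)) ^ 2 / c =
      c / 4 * n ^ 2 - (c / 2 + b) * n + (c / 2 + b) ^ 2 / c := by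
    field_simp; ring
  linarith

theorem ncard_sq_div_le_of_sq_lower_bound {f : ℕ → ℝ} {a b δ x : ℝ} (ha : 0 < a) (hb : 0 ≤ b)
    (hδ : 0 < δ) (hfδ : ∀ n, δ ≤ f n) (hquad : ∀ n : ℕ, a * n ^ 2 - b ≤ f n) (hx : 0 < x) :
    ({n | f n ≤ x}.ncard : ℝ) ^ 2 / x ≤ 2 / a + 2 * (b / a + 1) / δ := by
  have hM : 0 ≤ 2 / a + 2 * (b / a + 1) / δ := by positivity
  rcases eq_or_ne {n | f n ≤ x}.ncard 0 with hN | hN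
  · simpa [hN] using hM
  obtain ⟨j, hj, hNj⟩ := Set.exists_mem_ncard_le_succ hN
  have hjx : f j ≤ x := hj
  have hN2 : ({n | f n ≤ x}.ncard : ℝ) ^ 2 ≤ 2 * ((x + b) / a + 1) := by
    have hNj' : ({n | f n ≤ x}.ncard : ℝ) ≤ j + 1 := by exact_mod_cast hNj
    have hj2 : (j : ℝ) ^ 2 ≤ (x + b) / a := by
      rw [le_div_iff₀ ha]; linarith [hquad j]
    nlinarith [sq_nonneg ((j : ℝ) - 1)]
  have hδx : δ ≤ x := (hfδ j).trans hjx
  calc ({n | f n ≤ x}.ncard : ℝ) ^ 2 / x ≤ 2 * ((x + b) / a + 1) / x := by gcongr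
    _ = 2 / a + 2 * (b / a + 1) / x := by field_simp; ring
    _ ≤ 2 / a + 2 * (b / a + 1) / δ := by gcongr

theorem exists_ncard_sq_div_le_of_linear_diff {f : ℕ → ℝ} {c b : ℝ} (hf : Monotone f)
    (hf0 : 0 < f 0) (hc : 0 < c) (h : ∀ n : ℕ, c * n - b ≤ f (n + 1) - f n) :
    ∃ M, ∀ x, 0 < x → ({n | f n ≤ x}.ncard : ℝ) ^ 2 / x ≤ M :=
  ⟨_, fun _ hx => ncard_sq_div_le_of_sq_lower_bound (by positivity) (by positivity) hf0
    (fun n => hf (Nat.zero_le n)) (sq_lower_bound_of_linear_diff hc hf0.le h) hx⟩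

theorem stmt_9 (f : ℕ → ℝ) (hfpos : ∀ n, 0 < f n)
    (hΔ : ∀ n, f n < f (n + 1))
    (hΔ2 : ∀ n, f (n + 1) - f n ≤ f (n + 2) - f (n + 1))
    (hsup : ∀ M : ℝ, ∃ x : ℝ, 0 < x ∧
      M < (Set.ncard {n : ℕ | f n ≤ x} : ℝ) ^ 2 / x) :
    ∀ k : ℕ, 0 < k → ∃ n₀ : ℕ, 0 < n₀ ∧ ∃ c : ℤ,
      ∀ n, n₀ ≤ n → n ≤ n₀ + k → ⌊f (n + 1) - f n⌋ = c := by
  intro k hk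
  by_contra! hcon
  set d : ℕ → ℝ := fun n => f (n + 1) - f n
  have hd : Monotone d := monotone_nat_of_le_succ hΔ2
  have hjump : ∀ n, 0 < n → ⌊d n⌋ < ⌊d (n + k)⌋ := by
    intro n hn
    obtain ⟨m, hnm, hmk, hne⟩ := hcon n hn ⌊d n⌋
    exact (lt_of_le_of_ne (Int.floor_mono (hd hnm)) (Ne.symm hne)).trans_le
      (Int.floor_mono (hd hmk))
  obtain ⟨M, hM⟩ := exists_ncard_sq_div_le_of_linear_diff
    (strictMono_nat_of_lt_succ hΔ).monotone (hfpos 0) (by positivity : (0 : ℝ) < 1 / k)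
    (div_sub_two_le_of_floor_lt hd (sub_pos.mpr (hΔ 0)).le hk hjump)
  obtain ⟨x, hx, hMx⟩ := hsup M
  exact (hM x hx).not_gt hMx
end

section
/- Let f : ℕ → ℝ⁺ satisfy Δf > 0 and Δ²f ≥ 0, and suppose sup_{x>0} N(x)²/x = ∞ where N(x) = |{n : f(n) ≤ x}|. Then the graph of the sequence n ↦ ⌊f(n)⌋ contains an arithmetic progression of length 4; i.e., there exist positive integers d, e such that ⌊f(e+d)⌋ - ⌊f(e)⌋ = ⌊f(e+2d)⌋ - ⌊f(e+d)⌋ = ⌊f(e+3d)⌋ - ⌊f(e+2d)⌋ > 0 in a common positive value. -/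
/-- sum of the indicator word `v` over `[a, a+t)` -/
def wsum (v : ℕ → Bool) (a : ℕ) : ℕ → ℕ
  | 0 => 0
  | t+1 => wsum v a t + (if v (a + t) then 1 else 0)

lemma comb10 : ∀ b0 b1 b2 b3 b4 b5 b6 b7 b8 b9 : Bool,
    ∃ e : Fin 10, ∃ d : Fin 4, 0 < d.val ∧ e.val + 3*d.val ≤ 10 ∧
    wsum (fun i => [b0,b1,b2,b3,b4,b5,b6,b7,b8,b9].getD i false) e.val d.val
      = wsum (fun i => [b0,b1,b2,b3,b4,b5,b6,b7,b8,b9].getD i false) (e.val+d.val) d.val ∧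
    wsum (fun i => [b0,b1,b2,b3,b4,b5,b6,b7,b8,b9].getD i false) (e.val+2*d.val) d.val
      = wsum (fun i => [b0,b1,b2,b3,b4,b5,b6,b7,b8,b9].getD i false) (e.val+d.val) d.val := by
  decide

lemma wsum_congr (v u : ℕ → Bool) (h : ∀ i, i < 10 → v i = u i) :
    ∀ a t, a + t ≤ 10 → wsum v a t = wsum u a t := by
  intro a t
  induction t with
  | zero => intro; rfl
  | succ t ih =>
    intro hle
    simp only [wsum, ih (by omega), h (a+t) (by omega)]

lemma comb (v : ℕ → Bool) :
    ∃ e d : ℕ, 0 < d ∧ e + 3*d ≤ 10 ∧ wsum v e d = wsum v (e+d) d ∧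
      wsum v (e+2*d) d = wsum v (e+d) d := by
  obtain ⟨e, d, hd, h3, h1, h2⟩ := comb10 (v 0) (v 1) (v 2) (v 3) (v 4) (v 5) (v 6) (v 7) (v 8) (v 9)
  have hc : ∀ i, i < 10 →
      (fun i => [v 0,v 1,v 2,v 3,v 4,v 5,v 6,v 7,v 8,v 9].getD i false) i = v i := by
    intro i hi
    interval_cases i <;> rfl
  refine ⟨e.val, d.val, hd, h3, ?_, ?_⟩
  · rw [← wsum_congr _ _ hc e.val d.val (by omega),
      ← wsum_congr _ _ hc (e.val+d.val) d.val (by omega)]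
    exact h1
  · rw [← wsum_congr _ _ hc (e.val+2*d.val) d.val (by omega),
      ← wsum_congr _ _ hc (e.val+d.val) d.val (by omega)]
    exact h2

lemma dstep (f : ℕ → ℝ) (hΔ2 : ∀ n, f (n + 1) - f n ≤ f (n + 2) - f (n + 1)) :
    ∀ a b, a ≤ b → f (a+1) - f a ≤ f (b+1) - f b := by
  intro a b hab
  induction b, hab using Nat.le_induction with
  | base => exact le_refl _
  | succ n hn ih => exact ih.trans (hΔ2 n)

lemma chunk (f : ℕ → ℝ) (hΔ2 : ∀ n, f (n + 1) - f n ≤ f (n + 2) - f (n + 1)) :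
    ∀ t a b, a ≤ b → f (a+t) - f a ≤ f (b+t) - f b := by
  intro t
  induction t with
  | zero => simp
  | succ t ih =>
    intro a b hab
    have h1 := ih a b hab
    have h2 := dstep f hΔ2 (a+t) (b+t) (by omega)
    show f ((a+t)+1) - f a ≤ f ((b+t)+1) - f b
    linarith

lemma grow (f : ℕ → ℝ) (hΔ2 : ∀ n, f (n + 1) - f n ≤ f (n + 2) - f (n + 1)) :
    ∀ a t : ℕ, f a + t * (f 1 - f 0) ≤ f (a+t) := by
  have hlow : ∀ n, f 1 - f 0 ≤ f (n+1) - f n := fun n => dstep f hΔ2 0 n (Nat.zero_le n)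
  intro a t
  induction t with
  | zero => simp
  | succ t ih =>
    have := hlow (a+t)
    push_cast
    show f a + ((t:ℝ)+1) * (f 1 - f 0) ≤ f ((a+t)+1)
    push_cast at ih
    linarith

lemma window (g : ℕ → ℝ) (hg1 : ∀ n, 1 ≤ g (n+1) - g n)
    (hgd : ∀ a b, a ≤ b → g (a+1) - g a ≤ g (b+1) - g b) :
    (∃ m, ⌊g (m+9+1) - g (m+9)⌋ = ⌊g (m+1) - g m⌋) ∨
    (∀ k : ℕ, g 0 + 9/2 * (k:ℝ)^2 ≤ g (9*k)) := by
  by_cases h : ∃ m, ⌊g (m+9+1) - g (m+9)⌋ = ⌊g (m+1) - g m⌋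
  · exact Or.inl h
  right
  push_neg at h
  have hφmono : ∀ a b, a ≤ b → ⌊g (a+1) - g a⌋ ≤ ⌊g (b+1) - g b⌋ :=
    fun a b hab => Int.floor_le_floor (hgd a b hab)
  have hsucc : ∀ m, ⌊g (m+1) - g m⌋ + 1 ≤ ⌊g (m+9+1) - g (m+9)⌋ := by
    intro m
    have h1 := hφmono m (m+9) (by omega)
    have h2 := h m
    omega
  have hk : ∀ k : ℕ, (k:ℤ) + 1 ≤ ⌊g (9*k+1) - g (9*k)⌋ := by
    intro k
    induction k with
    | zero =>
      simpa using Int.le_floor.mpr (by exact_mod_cast hg1 0)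
    | succ k ih =>
      have h1 := hsucc (9*k)
      rw [show 9*(k+1) = 9*k+9 from by ring]
      push_cast
      omega
  have glin : ∀ a t : ℕ, g a + t * (g (a+1) - g a) ≤ g (a+t) := by
    intro a t
    induction t with
    | zero => simp
    | succ t ih =>
      have h2 := hgd a (a+t) (by omega)
      push_cast
      show g a + ((t:ℝ)+1) * (g (a+1) - g a) ≤ g ((a+t)+1)
      push_cast at ih
      linarith
  intro k
  induction k with
  | zero => simp
  | succ k ih =>
    have h1 := glin (9*k) 9
    have h2 : ((k:ℝ)+1) ≤ g (9*k+1) - g (9*k) := by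
      have h3 := hk k
      have hfl := Int.floor_le (g (9*k+1) - g (9*k))
      have h4 : ((k:ℤ)+1 : ℝ) ≤ (⌊g (9*k+1) - g (9*k)⌋ : ℝ) := by exact_mod_cast h3
      push_cast at h4
      linarith
    rw [show 9*(k+1) = 9*k+9 from by ring]
    push_cast at h1 ⊢
    nlinarith [h1, h2, ih]

theorem core (g : ℕ → ℝ) (hg1 : ∀ n, 1 ≤ g (n+1) - g n)
    (hgd : ∀ a b, a ≤ b → g (a+1) - g a ≤ g (b+1) - g b)
    (hwin : ∃ m, ⌊g (m+9+1) - g (m+9)⌋ = ⌊g (m+1) - g m⌋) :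
    ∃ e d : ℕ, 0 < d ∧ ∃ D : ℤ, 0 < D ∧
      ⌊g (e+d)⌋ - ⌊g e⌋ = D ∧ ⌊g (e+2*d)⌋ - ⌊g (e+d)⌋ = D ∧
      ⌊g (e+3*d)⌋ - ⌊g (e+2*d)⌋ = D := by
  obtain ⟨m, hm⟩ := hwin
  set c := ⌊g (m+1) - g m⌋ with hcdef
  have hφmono : ∀ a b, a ≤ b → ⌊g (a+1) - g a⌋ ≤ ⌊g (b+1) - g b⌋ :=
    fun a b hab => Int.floor_le_floor (hgd a b hab)
  have hconst : ∀ j, j ≤ 9 → ⌊g (m+j+1) - g (m+j)⌋ = c := by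
    intro j hj
    have h1 := hφmono m (m+j) (by omega)
    have h2 := hφmono (m+j) (m+9) (by omega)
    omega
  have hc1 : 1 ≤ c := Int.le_floor.mpr (by exact_mod_cast hg1 m)
  set v : ℕ → Bool := fun j => decide (⌊g (m+j+1)⌋ = ⌊g (m+j)⌋ + c + 1) with hvdef
  have hstep : ∀ j, j ≤ 9 → ⌊g (m+j+1)⌋ = ⌊g (m+j)⌋ + c + (if v j then 1 else 0) := by
    intro j hj
    have hfl := hconst j hj
    have hfl1 : (c:ℝ) ≤ g (m+j+1) - g (m+j) := hfl ▸ Int.floor_le _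
    have hfl2 : g (m+j+1) - g (m+j) < (c:ℝ)+1 := by
      have h5 := Int.lt_floor_add_one (g (m+j+1) - g (m+j))
      rw [hfl] at h5
      push_cast at h5 ⊢
      linarith
    have hlo : ⌊g (m+j)⌋ + c ≤ ⌊g (m+j+1)⌋ := by
      rw [← Int.floor_add_intCast]
      exact Int.floor_le_floor (by linarith)
    have hhi : ⌊g (m+j+1)⌋ ≤ ⌊g (m+j)⌋ + c + 1 := by
      have hz := Int.lt_floor_add_one (g (m+j))
      have h6 : ⌊g (m+j+1)⌋ < ⌊g (m+j)⌋ + c + 2 := by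
        apply Int.floor_lt.mpr
        push_cast
        linarith
      omega
    by_cases hv : ⌊g (m+j+1)⌋ = ⌊g (m+j)⌋ + c + 1
    · have hvt : v j = true := by simp [hvdef, hv]
      rw [hvt]
      simpa using hv
    · have hvt : v j = false := by simp [hvdef, hv]
      rw [hvt]
      simp
      omega
  have hbridge : ∀ t a, a + t ≤ 10 → ⌊g (m+a+t)⌋ - ⌊g (m+a)⌋ = c * t + (wsum v a t : ℤ) := by
    intro t
    induction t with
    | zero => intro a ha; simp [wsum]
    | succ t ih =>
      intro a ha
      have h1 := ih a (by omega)
      have h2 := hstep (a+t) (by omega)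
      rw [show m + (a+t) = m + a + t from by omega] at h2
      show ⌊g ((m+a+t)+1)⌋ - ⌊g (m+a)⌋ = c * ((t:ℤ)+1) + (wsum v a (t+1) : ℤ)
      rw [show wsum v a (t+1) = wsum v a t + (if v (a+t) then 1 else 0) from rfl]
      cases hvb : v (a+t) <;> rw [hvb] at h2 <;> simp at h2 ⊢ <;>
        push_cast <;> linear_combination h1 + h2
  obtain ⟨e, d, hd, h3, hs1, hs2⟩ := comb v
  refine ⟨m+e, d, hd, c*d + (wsum v e d : ℤ), ?_, ?_, ?_, ?_⟩
  · have hd1 : (1:ℤ) ≤ d := by exact_mod_cast hd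
    nlinarith [Int.natCast_nonneg (wsum v e d)]
  · exact hbridge d e (by omega)
  · have hb := hbridge d (e+d) (by omega)
    rw [show m+(e+d) = m+e+d from by omega] at hb
    rw [show m+e+d+d = m+e+2*d from by omega] at hb
    rw [← hs1] at hb
    exact hb
  · have hb := hbridge d (e+2*d) (by omega)
    rw [show m+(e+2*d) = m+e+2*d from by omega] at hb
    rw [show m+e+2*d+d = m+e+3*d from by omega] at hb
    rw [hs2, ← hs1] at hb
    exact hb

set_option maxHeartbeats 800000 in
theorem stmt_11 (f : ℕ → ℝ) (hfpos : ∀ n, 0 < f n)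
    (hΔ : ∀ n, f n < f (n + 1))
    (hΔ2 : ∀ n, f (n + 1) - f n ≤ f (n + 2) - f (n + 1))
    (hsup : ∀ M : ℝ, ∃ x : ℝ, 0 < x ∧
      M < (Set.ncard {n : ℕ | f n ≤ x} : ℝ) ^ 2 / x) :
    ∃ d e : ℕ, 0 < d ∧ 0 < e ∧ ∃ D : ℤ, 0 < D ∧
      ⌊f (e + d)⌋ - ⌊f e⌋ = D ∧ ⌊f (e + 2 * d)⌋ - ⌊f (e + d)⌋ = D ∧
      ⌊f (e + 3 * d)⌋ - ⌊f (e + 2 * d)⌋ = D := by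
  have hfmono : Monotone f := monotone_nat_of_le_succ fun n => (hΔ n).le
  have hδ : 0 < f 1 - f 0 := sub_pos.mpr (hΔ 0)
  set K := ⌈1/(f 1 - f 0)⌉₊ with hKdef
  have hK0 : 0 < K := Nat.ceil_pos.mpr (by positivity)
  have hKδ : 1 ≤ (K:ℝ) * (f 1 - f 0) := by
    have h := Nat.le_ceil (1/(f 1 - f 0))
    rw [← hKdef] at h
    calc (1:ℝ) = (1/(f 1 - f 0)) * (f 1 - f 0) := by field_simp
    _ ≤ K * (f 1 - f 0) := mul_le_mul_of_nonneg_right h hδ.le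
  set g : ℕ → ℝ := fun n => f (1 + K * n) with hgdef
  have hgn : ∀ n, g n = f (1 + K * n) := fun n => rfl
  have hg0 : 0 < g 0 := hfpos _
  have hgd : ∀ a b, a ≤ b → g (a+1) - g a ≤ g (b+1) - g b := by
    intro a b hab
    have h := chunk f hΔ2 K (1 + K*a) (1 + K*b)
      (by have := Nat.mul_le_mul_left K hab; omega)
    rw [hgn, hgn, hgn, hgn, show 1 + K*(a+1) = 1 + K*a + K from by ring,
      show 1 + K*(b+1) = 1 + K*b + K from by ring]
    exact h
  have hg1 : ∀ n, 1 ≤ g (n+1) - g n := by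
    intro n
    have h := grow f hΔ2 (1 + K*n) K
    rw [hgn, hgn, show 1 + K*(n+1) = 1 + K*n + K from by ring]
    linarith
  have hwin : ∃ m, ⌊g (m+9+1) - g (m+9)⌋ = ⌊g (m+1) - g m⌋ := by
    rcases window g hg1 hgd with h | hgrow
    · exact h
    exfalso
    obtain ⟨x, hx, hM⟩ := hsup (2*(1+18*(K:ℝ))^2 / f 0 + 162*(K:ℝ)^2)
    have hf0 : 0 < f 0 := hfpos 0
    have hMpos : 0 < 2*(1+18*(K:ℝ))^2 / f 0 + 162*(K:ℝ)^2 := by positivity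
    have hs0 : 0 ≤ Real.sqrt x := Real.sqrt_nonneg x
    have hs2 : Real.sqrt x ^ 2 = x := Real.sq_sqrt hx.le
    set k := ⌈Real.sqrt x⌉₊ + 1 with hkdef
    have hks : (k:ℝ) ≤ Real.sqrt x + 2 := by
      have h1 := Nat.ceil_lt_add_one hs0
      rw [hkdef]
      push_cast
      linarith
    have hxk : x < (k:ℝ)^2 := by
      have h1 : Real.sqrt x ≤ (⌈Real.sqrt x⌉₊:ℝ) := Nat.le_ceil _
      have h2 : Real.sqrt x < (k:ℝ) := by rw [hkdef]; push_cast; linarith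
      nlinarith
    have hgx : x < g (9*k) := by
      have h1 := hgrow k
      nlinarith [sq_nonneg ((k:ℝ))]
    have hN : Set.ncard {n:ℕ | f n ≤ x} ≤ 1 + K*(9*k) := by
      have hsub : {n:ℕ | f n ≤ x} ⊆ ↑(Finset.range (1 + K*(9*k))) := by
        intro n hn
        simp only [Finset.coe_range, Set.mem_Iio]
        by_contra hcon
        push_neg at hcon
        have h1 : g (9*k) ≤ f n := by rw [hgn]; exact hfmono hcon
        have h2 : f n ≤ x := hn
        linarith
      calc Set.ncard {n:ℕ | f n ≤ x}
          ≤ Set.ncard (↑(Finset.range (1 + K*(9*k))) : Set ℕ) :=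
            Set.ncard_le_ncard hsub (Finset.finite_toSet _)
        _ = 1 + K*(9*k) := by rw [Set.ncard_coe_finset, Finset.card_range]
    have hNr : ((Set.ncard {n:ℕ | f n ≤ x} : ℕ) : ℝ) ≤ 1 + 18*(K:ℝ) + 9*K*Real.sqrt x := by
      calc ((Set.ncard {n:ℕ | f n ≤ x} : ℕ) : ℝ) ≤ ((1 + K*(9*k) : ℕ):ℝ) := by
            exact_mod_cast hN
        _ = 1 + 9*(K:ℝ)*(k:ℝ) := by push_cast; ring
        _ ≤ 1 + 18*(K:ℝ) + 9*K*Real.sqrt x := by nlinarith [hks, Nat.cast_nonneg (α := ℝ) K]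
    rcases le_or_gt (f 0) x with hxf | hxf
    · have h1 : 2*(1+18*(K:ℝ))^2 ≤ 2*(1+18*(K:ℝ))^2 / f 0 * x := by
        rw [div_mul_eq_mul_div, le_div_iff₀ hf0]
        nlinarith [sq_nonneg (1+18*(K:ℝ))]
      have key : ((Set.ncard {n:ℕ | f n ≤ x} : ℕ) : ℝ)^2
          ≤ (2*(1+18*(K:ℝ))^2 / f 0 + 162*(K:ℝ)^2) * x := by
        nlinarith [sq_nonneg ((1+18*(K:ℝ)) - 9*K*Real.sqrt x), hNr, hs2, h1,
          Nat.cast_nonneg (α := ℝ) (Set.ncard {n:ℕ | f n ≤ x}), hs0,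
          Nat.cast_nonneg (α := ℝ) K]
      rw [lt_div_iff₀ hx] at hM
      linarith
    · have hempty : {n:ℕ | f n ≤ x} = ∅ := by
        ext n
        simp only [Set.mem_setOf_eq, Set.mem_empty_iff_false, iff_false, not_le]
        have h7 := hfmono (Nat.zero_le n)
        exact hxf.trans_le h7
      have h8 : Set.ncard {n:ℕ | f n ≤ x} = 0 := by rw [hempty]; exact Set.ncard_empty _
      rw [h8] at hM
      norm_num at hM
      linarith
  obtain ⟨e0, d0, hd0, D, hD, hb1, hb2, hb3⟩ := core g hg1 hgd hwin
  refine ⟨K*d0, 1 + K*e0, Nat.mul_pos hK0 hd0, by omega, D, hD, ?_, ?_, ?_⟩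
  · rw [show 1 + K*e0 + K*d0 = 1 + K*(e0+d0) from by ring, ← hgn (e0+d0), ← hgn e0]
    exact hb1
  · rw [show 1 + K*e0 + 2*(K*d0) = 1 + K*(e0+2*d0) from by ring,
      show 1 + K*e0 + K*d0 = 1 + K*(e0+d0) from by ring, ← hgn (e0+2*d0), ← hgn (e0+d0)]
    exact hb2
  · rw [show 1 + K*e0 + 3*(K*d0) = 1 + K*(e0+3*d0) from by ring,
      show 1 + K*e0 + 2*(K*d0) = 1 + K*(e0+2*d0) from by ring, ← hgn (e0+3*d0), ← hgn (e0+2*d0)]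
    exact hb3
end

section
/- Let f : ℕ → ℝ⁺ satisfy Δf > 0 and Δ²f ≥ 0, and suppose limsup_{x→∞} N(x)²/x > 18 where N(x) = |{n : f(n) ≤ x}|. Then the graph of n ↦ ⌊f(n)⌋ contains an arithmetic progression of length 4. -/
/-!
Fix `s ≥ 1`, `K ≥ 1` and let `g n = ⌊f (s + K (n + 1))⌋ - ⌊f (s + K n)⌋`. Three consecutive blocks
of `d` jumps with the same sum `D > 0` are exactly a 4-term progression `s + K e + i K d` in the
graph of `⌊f⌋`, and convexity of `f` makes `g` quasi-monotone: `g i ≤ g j + 1` for `i ≤ j`.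
A finite check shows that every quasi-monotone word of length 27 with values in four consecutive
integers has three consecutive blocks of equal sum. So, without a progression, `g` increases by 3
within every 27 steps, and `⌊f (s + K T)⌋ - ⌊f s⌋ ≥ (T ^ 2 - 35 T) / 18` as soon as `g 0 ≥ 2`.

If `⌊f⌋` jumps by at least 2 at some `s ≥ 1`, this with `K = 1` gives `f n ≥ n ^ 2 / 18 - O(n)`,
hence `limsup N(x) ^ 2 / x ≤ 18`. Otherwise `⌊f⌋` grows at most linearly from `n = 1` on, whereas
`f (1 + K) - f 1 ≥ K (f 2 - f 1) ≥ 3` for large `K`, and then the bound above grows quadratically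
in `T`.
-/

open Finset Filter

section BlockSums

variable {M N : Type*} [AddCommMonoid M] [AddCommMonoid N]

-- A list sum rather than a `Finset` sum, so that the kernel evaluates it fast in `decide`.
def blockSum (u : ℕ → M) (a d : ℕ) : M :=
  ((List.range d).map fun i => u (a + i)).sum

theorem blockSum_eq_sum (u : ℕ → M) (a d : ℕ) :
    blockSum u a d = ∑ i ∈ range d, u (a + i) := by
  rw [Finset.sum_eq_multiset_sum]
  rfl

def EqualBlocks (u : ℕ → M) (e d : ℕ) : Prop :=
  blockSum u e d = blockSum u (e + d) d ∧ blockSum u (e + d) d = blockSum u (e + 2 * d) d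

instance [DecidableEq M] (u : ℕ → M) (e d : ℕ) : Decidable (EqualBlocks u e d) :=
  inferInstanceAs (Decidable (_ ∧ _))

def HasEqualBlocks (n : ℕ) (u : ℕ → M) : Prop :=
  ∃ d e, 0 < d ∧ e + 3 * d ≤ n ∧ EqualBlocks u e d

instance [DecidableEq M] (n : ℕ) (u : ℕ → M) : Decidable (HasEqualBlocks n u) :=
  decidable_of_iff (∃ d < n, ∃ e < n, 0 < d ∧ e + 3 * d ≤ n ∧ EqualBlocks u e d) <| by
    constructor
    · rintro ⟨d, -, e, -, h⟩
      exact ⟨d, e, h⟩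
    · rintro ⟨d, e, hd, hn, h⟩
      exact ⟨d, by omega, e, by omega, hd, hn, h⟩

theorem blockSum_eq_map_add (φ : M →+ N) (c : N) {u : ℕ → N} {v : ℕ → M} {a d : ℕ}
    (h : ∀ i < d, u (a + i) = φ (v (a + i)) + c) :
    blockSum u a d = φ (blockSum v a d) + d • c := by
  simp only [blockSum_eq_sum, map_sum]
  rw [sum_congr rfl fun i hi => h i (mem_range.1 hi), sum_add_distrib, sum_const,
    card_range]

theorem HasEqualBlocks.of_eq_map_add (φ : M →+ N) (c : N) {n : ℕ} {u : ℕ → N} {v : ℕ → M}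
    (h : ∀ i < n, u i = φ (v i) + c) (hv : HasEqualBlocks n v) : HasEqualBlocks n u := by
  obtain ⟨d, e, hd, hn, h₁, h₂⟩ := hv
  have hblock : ∀ a, a + d ≤ n → blockSum u a d = φ (blockSum v a d) + d • c :=
    fun a ha => blockSum_eq_map_add φ c fun i hi => h _ (by omega)
  refine ⟨d, e, hd, hn, ?_, ?_⟩
  · rw [hblock e (by omega), hblock (e + d) (by omega), h₁]
  · rw [hblock (e + d) (by omega), hblock (e + 2 * d) (by omega), h₂]

theorem HasEqualBlocks.of_shift {u : ℕ → M} {t n m : ℕ}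
    (h : HasEqualBlocks n fun i => u (t + i)) (hm : t + n ≤ m) : HasEqualBlocks m u := by
  obtain ⟨d, e, hd, hn, h₁, h₂⟩ := h
  refine ⟨d, t + e, hd, by omega, ?_⟩
  simp only [EqualBlocks, blockSum, add_assoc] at h₁ h₂ ⊢
  exact ⟨h₁, h₂⟩

end BlockSums

section BinaryWords

def binaryWords : ℕ → List (List ℕ)
  | 0 => [[]]
  | n + 1 => (binaryWords n).flatMap fun w => [0 :: w, 1 :: w]

theorem map_range_mem_binaryWords (n : ℕ) (v : ℕ → ℕ) (hv : ∀ i < n, v i ≤ 1) :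
    (List.range n).map v ∈ binaryWords n := by
  induction n generalizing v with
  | zero => simp [binaryWords]
  | succ n ih =>
    have hv0 : v 0 ≤ 1 := hv 0 n.succ_pos
    rw [List.range_succ_eq_map, List.map_cons, List.map_map]
    simp only [binaryWords, List.mem_flatMap]
    refine ⟨_, ih (v ∘ Nat.succ) fun i hi => hv _ (by omega), ?_⟩
    interval_cases v 0 <;> simp

theorem getD_map_range {v : ℕ → ℕ} {n i : ℕ} (hi : i < n) :
    ((List.range n).map v).getD i 0 = v i := by
  simp [List.getD_eq_getElem?_getD, List.getElem?_range hi]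

theorem hasEqualBlocks_ten_of_mem_binaryWords :
    ∀ w ∈ binaryWords 10, HasEqualBlocks 10 (w.getD · 0) := by
  decide +kernel

def freeBinaryNine : List (List ℕ) :=
  [[0, 0, 1, 1, 0, 1, 1, 0, 0], [0, 0, 1, 1, 0, 1, 1, 0, 1], [0, 1, 0, 0, 1, 0, 0, 1, 1],
   [1, 0, 1, 1, 0, 1, 1, 0, 0], [1, 1, 0, 0, 1, 0, 0, 1, 0], [1, 1, 0, 0, 1, 0, 0, 1, 1]]

theorem hasEqualBlocks_or_mem_freeBinaryNine :
    ∀ w ∈ binaryWords 9, HasEqualBlocks 9 (w.getD · 0) ∨ w ∈ freeBinaryNine := by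
  decide +kernel

def threeLevels (A B C : List ℕ) (i : ℕ) : ℕ :=
  if i < 9 then A.getD i 0 else if i < 18 then B.getD (i - 9) 0 + 1 else C.getD (i - 18) 0 + 2

theorem hasEqualBlocks_threeLevels : ∀ A ∈ freeBinaryNine, ∀ B ∈ freeBinaryNine,
    ∀ C ∈ freeBinaryNine, B.getD 0 0 = 1 → C.getD 0 0 = 1 →
      HasEqualBlocks 27 (threeLevels A B C) := by
  decide +kernel

variable {u : ℕ → ℕ} {n k : ℕ}

theorem map_sub_mem_binaryWords (hu : ∀ i < n, k ≤ u i ∧ u i ≤ k + 1) :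
    (List.range n).map (fun i => u i - k) ∈ binaryWords n :=
  map_range_mem_binaryWords n _ fun i hi => by have := hu i hi; omega

theorem HasEqualBlocks.of_binaryWord (hu : ∀ i < n, k ≤ u i ∧ u i ≤ k + 1)
    (h : HasEqualBlocks n (((List.range n).map (fun i => u i - k)).getD · 0)) :
    HasEqualBlocks n u :=
  h.of_eq_map_add (AddMonoidHom.id ℕ) k fun i hi => by
    rw [AddMonoidHom.id_apply, getD_map_range hi]
    have := hu i hi
    omega

theorem hasEqualBlocks_ten_of_two_values (hu : ∀ i < 10, k ≤ u i ∧ u i ≤ k + 1) :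
    HasEqualBlocks 10 u :=
  .of_binaryWord hu (hasEqualBlocks_ten_of_mem_binaryWords _ (map_sub_mem_binaryWords hu))

theorem map_sub_mem_freeBinaryNine (hu : ∀ i < 9, k ≤ u i ∧ u i ≤ k + 1)
    (hfree : ¬ HasEqualBlocks 9 u) :
    (List.range 9).map (fun i => u i - k) ∈ freeBinaryNine :=
  (hasEqualBlocks_or_mem_freeBinaryNine _ (map_sub_mem_binaryWords hu)).resolve_left
    fun h => hfree (.of_binaryWord hu h)

end BinaryWords

def runningMax (u : ℕ → ℕ) (i : ℕ) : ℕ :=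
  (range (i + 1)).sup u

section RunningMax

variable {u : ℕ → ℕ}

theorem runningMax_mono : Monotone (runningMax u) :=
  fun _ _ hij => sup_mono (range_subset_range.2 (by omega))

theorem le_runningMax (i : ℕ) : u i ≤ runningMax u i :=
  le_sup (mem_range.2 i.lt_succ_self)

theorem runningMax_succ (i : ℕ) : runningMax u (i + 1) = max (u (i + 1)) (runningMax u i) := by
  simp only [runningMax, range_add_one (n := i + 1), sup_insert]

theorem runningMax_le {c i : ℕ} (h : ∀ j ≤ i, u j ≤ c) : runningMax u i ≤ c :=
  Finset.sup_le fun j hj => h j (by simp at hj; omega)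

theorem runningMax_le_add_one {n i : ℕ} (hq : ∀ i j, i ≤ j → j < n → u i ≤ u j + 1)
    (hi : i < n) : runningMax u i ≤ u i + 1 := by
  obtain ⟨j, hj, hju⟩ := exists_mem_eq_sup _ nonempty_range_add_one u
  rw [runningMax, hju]
  exact hq j i (by simp at hj; omega) hi

end RunningMax

section QuasiMonotoneWords

variable {u : ℕ → ℕ} (hq : ∀ i j, i ≤ j → j < 27 → u i ≤ u j + 1)
  (hfree : ¬HasEqualBlocks 27 u)
include hq hfree

theorem runningMax_add_nine {t : ℕ} (ht : t ≤ 17) :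
    runningMax u t + 1 ≤ runningMax u (t + 9) ∧ 2 ≤ runningMax u (t + 9) := by
  by_contra hstall
  -- otherwise `u` only takes the values `M - 1` and `M` on `[t, t + 10)`, where
  -- `M = runningMax u (t + 9)`
  refine hfree (HasEqualBlocks.of_shift (t := t) (n := 10) ?_ (by omega))
  refine hasEqualBlocks_ten_of_two_values (k := runningMax u (t + 9) - 1) fun i hi => ?_
  have := le_runningMax (u := u) (t + i)
  have := runningMax_le_add_one hq (show t + i < 27 by omega)
  have := runningMax_mono (u := u) (show t ≤ t + i by omega)
  have := runningMax_mono (u := u) (show t + i ≤ t + 9 by omega)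
  omega

theorem levels_of_not_hasEqualBlocks (hu : ∀ i < 27, u i ≤ 3) :
    (∀ i < 9, u i ≤ 1) ∧ (∀ i < 9, 1 ≤ u (9 + i) ∧ u (9 + i) ≤ 2) ∧
      (∀ i < 9, 2 ≤ u (18 + i)) ∧ u 9 = 2 ∧ u 18 = 3 := by
  have h9 : 2 ≤ runningMax u 9 := (runningMax_add_nine hq hfree (t := 0) (by omega)).2
  have h17 : runningMax u 8 + 1 ≤ runningMax u 17 :=
    (runningMax_add_nine hq hfree (t := 8) (by omega)).1
  have h18 : runningMax u 9 + 1 ≤ runningMax u 18 :=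
    (runningMax_add_nine hq hfree (t := 9) (by omega)).1
  have h26 : runningMax u 17 + 1 ≤ runningMax u 26 :=
    (runningMax_add_nine hq hfree (t := 17) (by omega)).1
  have h26' : runningMax u 26 ≤ 3 := runningMax_le fun j hj => hu j (by omega)
  have : runningMax u 9 = max (u 9) (runningMax u 8) := runningMax_succ 8
  have : runningMax u 18 = max (u 18) (runningMax u 17) := runningMax_succ 17
  have := runningMax_mono (u := u) (show 9 ≤ 17 by omega)
  have := runningMax_mono (u := u) (show 18 ≤ 26 by omega)
  refine ⟨fun i hi => ?_, fun i hi => ?_, fun i hi => ?_, by omega, ?_⟩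
  · have := le_runningMax (u := u) i
    have := runningMax_mono (u := u) (show i ≤ 8 by omega)
    omega
  · have := le_runningMax (u := u) (9 + i)
    have := runningMax_le_add_one hq (show 9 + i < 27 by omega)
    have := runningMax_mono (u := u) (show 9 ≤ 9 + i by omega)
    have := runningMax_mono (u := u) (show 9 + i ≤ 17 by omega)
    omega
  · have := runningMax_le_add_one hq (show 18 + i < 27 by omega)
    have := runningMax_mono (u := u) (show 18 ≤ 18 + i by omega)
    omega
  · have := hu 18 (by omega)
    omega

end QuasiMonotoneWords

theorem hasEqualBlocks_of_quasiMonotone {u : ℕ → ℕ} (hu : ∀ i < 27, u i ≤ 3)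
    (hq : ∀ i j, i ≤ j → j < 27 → u i ≤ u j + 1) : HasEqualBlocks 27 u := by
  by_contra hfree
  -- `u` is made of three pattern-free binary words, stacked at heights 0, 1 and 2
  obtain ⟨hA, hB, hC, hu9, hu18⟩ := levels_of_not_hasEqualBlocks hq hfree hu
  have hfree9 : ∀ t, t + 9 ≤ 27 → ¬HasEqualBlocks 9 fun i => u (t + i) :=
    fun t ht h => hfree (h.of_shift ht)
  have memA := map_sub_mem_freeBinaryNine (k := 0) (fun i hi => by simpa using hA i hi)
    (hfree9 0 (by omega))
  have memB := map_sub_mem_freeBinaryNine (k := 1) hB (hfree9 9 (by omega))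
  have memC := map_sub_mem_freeBinaryNine (k := 2) (fun i hi => ⟨hC i hi, hu _ (by omega)⟩)
    (hfree9 18 (by omega))
  refine hfree <| (hasEqualBlocks_threeLevels _ memA _ memB _ memC ?_ ?_).of_eq_map_add
    (AddMonoidHom.id ℕ) 0 fun i hi => ?_
  · rw [getD_map_range (by omega), add_zero, hu9]
  · rw [getD_map_range (by omega), add_zero, hu18]
  simp only [threeLevels, AddMonoidHom.id_apply, add_zero]
  split_ifs
  · rw [getD_map_range (by omega), zero_add, Nat.sub_zero]
  · have := hB (i - 9) (by omega)
    rw [getD_map_range (by omega), show 9 + (i - 9) = i by omega] at *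
    omega
  · have := hC (i - 18) (by omega)
    rw [getD_map_range (by omega), show 18 + (i - 18) = i by omega] at *
    omega

section Growth

variable {g : ℕ → ℤ} (hq : ∀ i j, i ≤ j → g i ≤ g j + 1)
  (hfree : ∀ e d, 0 < d → ¬EqualBlocks g e d)
include hq hfree

theorem exists_add_three_le (m : ℕ) : ∃ m' ≤ m + 27, g m + 3 ≤ g m' := by
  by_contra! hlow
  -- otherwise `g` stays in `[g m - 1, g m + 2]` on the 27 terms after `m`
  set u : ℕ → ℕ := fun i => (g (m + 1 + i) - (g m - 1)).toNat
  have hu : ∀ i < 27, g (m + 1 + i) = (u i : ℤ) + (g m - 1) := fun i _ => by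
    have := hq m (m + 1 + i) (by omega)
    simp only [u]
    omega
  have hwin : HasEqualBlocks 27 u := by
    refine hasEqualBlocks_of_quasiMonotone (fun i hi => ?_) (fun i j hij hj => ?_)
    · have := hlow (m + 1 + i) (by omega)
      have := hu i hi
      omega
    · have := hq (m + 1 + i) (m + 1 + j) (by omega)
      have := hu i (by omega)
      have := hu j hj
      omega
  obtain ⟨d, e, hd, -, h⟩ :=
    (hwin.of_eq_map_add (Nat.castAddMonoidHom ℤ) _ hu).of_shift (m := m + 1 + 27) le_rfl
  exact hfree e d hd h

theorem natCast_add_nine_mul_le (n : ℕ) : (n : ℤ) + 9 * g 0 ≤ 9 * g n + 35 := by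
  have hstep : ∀ j : ℕ, ∃ m ≤ 27 * j, g 0 + 3 * j ≤ g m := by
    intro j
    induction j with
    | zero => exact ⟨0, le_rfl, by simp⟩
    | succ j ih =>
      obtain ⟨m, hm, hgm⟩ := ih
      obtain ⟨m', hm', hgm'⟩ := exists_add_three_le hq hfree m
      exact ⟨m', by omega, by push_cast; omega⟩
  obtain ⟨m, hm, hgm⟩ := hstep (n / 27)
  have := hq m n (by omega)
  omega

theorem quadratic_le_sum (h0 : 2 ≤ g 0) (T : ℕ) :
    (T : ℤ) * T - 35 * T ≤ 18 * ∑ i ∈ range T, g i := by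
  induction T with
  | zero => simp
  | succ T ih =>
    have := natCast_add_nine_mul_le hq hfree T
    rw [sum_range_succ]
    push_cast
    linarith

end Growth

theorem floor_sub_floor_le_add_one {R : Type*} [Field R] [LinearOrder R] [IsStrictOrderedRing R]
    [FloorRing R] {x y x' y' : R} (h : x - y ≤ x' - y') :
    ⌊x⌋ - ⌊y⌋ ≤ ⌊x'⌋ - ⌊y'⌋ + 1 := by
  have := Int.floor_le x
  have := Int.sub_one_lt_floor y
  have := Int.sub_one_lt_floor x'
  have := Int.floor_le y'
  have : ((⌊x⌋ - ⌊y⌋ : ℤ) : R) < ((⌊x'⌋ - ⌊y'⌋ + 2 : ℤ) : R) := by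
    push_cast
    linarith
  have := Int.cast_lt.1 this
  omega

theorem sub_eq_sum_range_sub {G : Type*} [AddCommGroup G] (f : ℕ → G) (a t : ℕ) :
    f (a + t) - f a = ∑ i ∈ range t, (f (a + i + 1) - f (a + i)) := by
  have := sum_range_sub (fun i => f (a + i)) t
  simp only [add_zero, ← add_assoc] at this
  exact this.symm

section Convex

variable {f : ℕ → ℝ} (hΔ2 : ∀ n, f (n + 1) - f n ≤ f (n + 2) - f (n + 1))
include hΔ2

theorem sub_le_sub_of_convex {a b : ℕ} (hab : a ≤ b) (t : ℕ) :
    f (a + t) - f a ≤ f (b + t) - f b := by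
  rw [sub_eq_sum_range_sub, sub_eq_sum_range_sub]
  exact sum_le_sum fun i _ => monotone_nat_of_le_succ hΔ2 (by omega : a + i ≤ b + i)

theorem mul_sub_le_sub_of_convex (a t : ℕ) : t * (f (a + 1) - f a) ≤ f (a + t) - f a := by
  rw [sub_eq_sum_range_sub f a t]
  have := card_nsmul_le_sum (range t) _ _ fun i _ =>
    monotone_nat_of_le_succ hΔ2 (by omega : a + 0 ≤ a + i)
  rwa [card_range, nsmul_eq_mul, add_zero] at this

end Convex

def FloorGraphHasAP4 (f : ℕ → ℝ) : Prop :=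
  ∃ d e : ℕ, 0 < d ∧ 0 < e ∧ ∃ D : ℤ, 0 < D ∧
    ⌊f (e + d)⌋ - ⌊f e⌋ = D ∧ ⌊f (e + 2 * d)⌋ - ⌊f (e + d)⌋ = D ∧
    ⌊f (e + 3 * d)⌋ - ⌊f (e + 2 * d)⌋ = D

noncomputable def floorJumps (f : ℕ → ℝ) (s K n : ℕ) : ℤ :=
  ⌊f (s + K * (n + 1))⌋ - ⌊f (s + K * n)⌋

section FloorJumps

variable {f : ℕ → ℝ} {s K : ℕ}

theorem blockSum_floorJumps (e d : ℕ) :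
    blockSum (floorJumps f s K) e d = ⌊f (s + K * (e + d))⌋ - ⌊f (s + K * e)⌋ := by
  have := sum_range_sub (fun i => ⌊f (s + K * (e + i))⌋) d
  simp only [add_zero, ← add_assoc] at this
  rw [blockSum_eq_sum]
  exact this

theorem floorJumps_le_add_one (hΔ2 : ∀ n, f (n + 1) - f n ≤ f (n + 2) - f (n + 1)) {i j : ℕ}
    (hij : i ≤ j) : floorJumps f s K i ≤ floorJumps f s K j + 1 := by
  refine floor_sub_floor_le_add_one ?_
  have := sub_le_sub_of_convex hΔ2 (show s + K * i ≤ s + K * j by gcongr) K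
  ring_nf at this ⊢
  exact this

theorem floorGraphHasAP4_of_equalBlocks (hs : 0 < s) (hK : 0 < K) {e d : ℕ} (hd : 0 < d)
    (hD : 0 < blockSum (floorJumps f s K) e d) (h : EqualBlocks (floorJumps f s K) e d) :
    FloorGraphHasAP4 f := by
  obtain ⟨h₁, h₂⟩ := h
  simp only [blockSum_floorJumps] at hD h₁ h₂
  refine ⟨K * d, s + K * e, by positivity, by positivity, _, hD, ?_, ?_, ?_⟩
  · ring_nf
  · ring_nf at h₁ ⊢
    omega
  · ring_nf at h₁ h₂ ⊢
    omega

end FloorJumps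

section FloorGrowth

variable {f : ℕ → ℝ} (hΔ2 : ∀ n, f (n + 1) - f n ≤ f (n + 2) - f (n + 1))
  (hno : ¬FloorGraphHasAP4 f)
include hΔ2 hno

theorem floor_quadratic_growth {s K : ℕ} (hs : 0 < s) (hjump : ⌊f s⌋ + 2 ≤ ⌊f (s + K)⌋)
    (T : ℕ) : (T : ℤ) * T - 35 * T ≤ 18 * (⌊f (s + K * T)⌋ - ⌊f s⌋) := by
  have hK : 0 < K := Nat.pos_of_ne_zero fun hK => by simp [hK] at hjump
  have hq : ∀ i j, i ≤ j → floorJumps f s K i ≤ floorJumps f s K j + 1 :=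
    fun i j => floorJumps_le_add_one hΔ2
  have h0 : 2 ≤ floorJumps f s K 0 := by
    simp only [floorJumps]
    ring_nf at hjump ⊢
    omega
  have hfree : ∀ e d, 0 < d → ¬EqualBlocks (floorJumps f s K) e d := fun e d hd h => by
    refine hno (floorGraphHasAP4_of_equalBlocks hs hK hd ?_ h)
    rw [blockSum_eq_sum]
    refine sum_pos (fun i _ => ?_) (nonempty_range_iff.2 hd.ne')
    have := hq 0 (e + i) (by omega)
    omega
  have hsum : ∑ i ∈ range T, floorJumps f s K i = ⌊f (s + K * T)⌋ - ⌊f s⌋ := by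
    simpa [blockSum_eq_sum] using blockSum_floorJumps (f := f) (s := s) (K := K) 0 T
  simpa [hsum] using quadratic_le_sum hq hfree h0 T

variable (hΔ : ∀ n, f n < f (n + 1))
include hΔ

theorem exists_floor_jump : ∃ n, 0 < n ∧ ⌊f n⌋ + 2 ≤ ⌊f (n + 1)⌋ := by
  by_contra! hsmall
  have hlin : ∀ m : ℕ, ⌊f (1 + m)⌋ ≤ ⌊f 1⌋ + m := by
    intro m
    induction m with
    | zero => simp
    | succ m ih =>
      have := hsmall (1 + m) (by omega)
      push_cast
      rw [← add_assoc]
      omega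
  obtain ⟨K, hK⟩ := exists_nat_gt (3 / (f 2 - f 1))
  have hjump : ⌊f 1⌋ + 2 ≤ ⌊f (1 + K)⌋ := by
    have h₁ := mul_sub_le_sub_of_convex hΔ2 1 K
    have h₂ := (div_lt_iff₀ (by linarith [hΔ 1])).1 hK
    refine Int.le_floor.2 ?_
    push_cast
    norm_num at h₁
    linarith [Int.floor_le (f 1)]
  have hT := floor_quadratic_growth hΔ2 hno one_pos hjump (18 * K + 36)
  have := hlin (K * (18 * K + 36))
  push_cast at hT this
  nlinarith

end FloorGrowth

section Counting

variable {f : ℕ → ℝ} (hf : Monotone f)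
include hf

theorem apply_ncard_sub_one_le {x : ℝ} (h : 0 < {n | f n ≤ x}.ncard) :
    f ({n | f n ≤ x}.ncard - 1) ≤ x := by
  by_contra! hx
  have hsub : {n | f n ≤ x} ⊆ Set.Iio ({n | f n ≤ x}.ncard - 1) := fun n hn =>
    Set.mem_Iio.2 <| lt_of_not_ge fun hle => (hx.trans_le (hf hle)).not_ge hn
  have := Set.ncard_le_ncard hsub (Set.finite_Iio _)
  rw [← coe_range, Set.ncard_coe_finset, card_range] at this
  omega

theorem eventually_ncard_sq_le {n₀ : ℕ} {κ A B ρ : ℝ} (hκ : 0 ≤ κ) (hA : 0 ≤ A) (hB : 0 ≤ B)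
    (hρ : κ < ρ) (hgrowth : ∀ n ≥ n₀, (n : ℝ) ^ 2 ≤ κ * f n + A * n + B) :
    ∀ᶠ x in atTop, ({n | f n ≤ x}.ncard : ℝ) ^ 2 ≤ ρ * x := by
  set C := ρ * (A + 2 + B) / (ρ - κ)
  have hρ0 : 0 < ρ := hκ.trans_lt hρ
  filter_upwards [eventually_ge_atTop ((n₀ ^ 2 + C ^ 2) / ρ)] with x hx
  rw [div_le_iff₀' hρ0] at hx
  set N := {n | f n ≤ x}.ncard
  rcases Nat.eq_zero_or_pos N with hN | hN
  · rw [hN, Nat.cast_zero]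
    nlinarith [sq_nonneg (n₀ : ℝ), sq_nonneg C]
  by_cases hsmall : N ≤ n₀
  · have : (N : ℝ) ≤ n₀ := by exact_mod_cast hsmall
    nlinarith [sq_nonneg C]
  by_contra! hlarge
  have hm := hgrowth (N - 1) (by omega)
  have hfx : f (N - 1) ≤ x := apply_ncard_sub_one_le hf hN
  have hN1 : (1 : ℝ) ≤ N := by exact_mod_cast hN
  rw [Nat.cast_sub hN, Nat.cast_one] at hm
  -- `ρ x < N ^ 2` and the bound at `N - 1` force `N ≤ C`, which contradicts `C ^ 2 ≤ ρ x`
  have hquad : (ρ - κ) * N * N ≤ ρ * (A + 2 + B) * N := by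
    nlinarith [mul_le_mul_of_nonneg_left hm hρ0.le, mul_le_mul_of_nonneg_left hfx hκ,
      mul_le_mul_of_nonneg_left hlarge.le hκ, mul_nonneg hB (sub_nonneg.2 hN1)]
  have hNC : (N : ℝ) ≤ C := by
    rw [le_div_iff₀ (by linarith)]
    nlinarith
  nlinarith

theorem limsup_ncard_sq_div_le {n₀ : ℕ} {κ A B : ℝ} (hκ : 0 ≤ κ) (hA : 0 ≤ A) (hB : 0 ≤ B)
    (hgrowth : ∀ n ≥ n₀, (n : ℝ) ^ 2 ≤ κ * f n + A * n + B) :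
    limsup (fun x : ℝ => ENNReal.ofReal (({n | f n ≤ x}.ncard : ℝ) ^ 2 / x)) atTop ≤
      ENNReal.ofReal κ := by
  refine ENNReal.le_of_forall_pos_le_add fun ε hε _ => ?_
  rw [← ENNReal.ofReal_coe_nnreal, ← ENNReal.ofReal_add hκ ε.coe_nonneg]
  refine limsup_le_of_le (by isBoundedDefault) ?_
  filter_upwards [eventually_ncard_sq_le hf hκ hA hB (lt_add_of_pos_right κ hε) hgrowth,
    eventually_gt_atTop 0] with x hx hx0
  exact ENNReal.ofReal_le_ofReal ((div_le_iff₀ hx0).2 hx)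

end Counting

theorem stmt_12_general (f : ℕ → ℝ)
    (hΔ : ∀ n, f n < f (n + 1))
    (hΔ2 : ∀ n, f (n + 1) - f n ≤ f (n + 2) - f (n + 1))
    (h18 : (18 : ENNReal) < Filter.limsup (fun x : ℝ =>
      ENNReal.ofReal ((Set.ncard {n : ℕ | f n ≤ x} : ℝ) ^ 2 / x)) Filter.atTop) :
    ∃ d e : ℕ, 0 < d ∧ 0 < e ∧ ∃ D : ℤ, 0 < D ∧
      ⌊f (e + d)⌋ - ⌊f e⌋ = D ∧ ⌊f (e + 2 * d)⌋ - ⌊f (e + d)⌋ = D ∧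
      ⌊f (e + 3 * d)⌋ - ⌊f (e + 2 * d)⌋ = D := by
  by_contra hno
  obtain ⟨n₀, hn₀, hjump⟩ := exists_floor_jump hΔ2 hno hΔ
  have hgrowth : ∀ n ≥ n₀,
      (n : ℝ) ^ 2 ≤ 18 * f n + (2 * n₀ + 35) * n + (n₀ ^ 2 + 18 + 18 * |f n₀|) := by
    intro n hn
    obtain ⟨T, rfl⟩ := Nat.exists_eq_add_of_le hn
    have hT := Int.cast_le (R := ℝ) |>.2 <|
      floor_quadratic_growth hΔ2 hno hn₀ (K := 1) (by simpa using hjump) T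
    push_cast at hT ⊢
    rw [one_mul] at hT
    nlinarith [Int.floor_le (f (n₀ + T)), Int.sub_one_lt_floor (f n₀), neg_abs_le (f n₀)]
  have hlimsup := limsup_ncard_sq_div_le (strictMono_nat_of_lt_succ hΔ).monotone (by norm_num)
    (by positivity) (by positivity) hgrowth
  rw [ENNReal.ofReal_ofNat] at hlimsup
  exact hlimsup.not_gt h18

theorem stmt_12 (f : ℕ → ℝ) (hfpos : ∀ n, 0 < f n)
    (hΔ : ∀ n, f n < f (n + 1))
    (hΔ2 : ∀ n, f (n + 1) - f n ≤ f (n + 2) - f (n + 1))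
    (h18 : (18 : ENNReal) < Filter.limsup (fun x : ℝ =>
      ENNReal.ofReal ((Set.ncard {n : ℕ | f n ≤ x} : ℝ) ^ 2 / x)) Filter.atTop) :
    ∃ d e : ℕ, 0 < d ∧ 0 < e ∧ ∃ D : ℤ, 0 < D ∧
      ⌊f (e + d)⌋ - ⌊f e⌋ = D ∧ ⌊f (e + 2 * d)⌋ - ⌊f (e + d)⌋ = D ∧
      ⌊f (e + 3 * d)⌋ - ⌊f (e + 2 * d)⌋ = D :=
  stmt_12_general f hΔ hΔ2 h18
end

section
/- The following is equivalent to van der Waerden's theorem: if a : ℕ → ℕ is a strictly increasing sequence and there exists a twice differentiable f : ℝ⁺ → ℝ with f''(x) → 0 as x → ∞ and a(n) = f(n) + O(1), then for every k ≥ 3 the graph of a contains a k-term arithmetic progression. Concretely (the direction showing this implies van der Waerden): if ℕ = C₁ ∪ ⋯ ∪ C_r is a partition, define R(n) = j when n ∈ C_j and a(n) = rn + R(n); then a is strictly increasing, a(n) = rn + O(1) with f(x) = rx satisfying f'' ≡ 0, and any k-term AP in the graph of a with k > r forces R to be constant on a k-term AP of ℕ, giving a monochromatic k-term AP; by pigeonhole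 over colors there is one color class containing arbitrarily long APs. -/
/-!
Colour `n` by `R n < r` and encode the colouring in the sequence `a n = r * n + R n`. It is strictly
increasing and stays within `r` of the linear function `x ↦ r * x`, whose second derivative vanishes.
Along a progression in the graph of `a` with step `d` and increment `D`, the colours form an integer
progression with common difference `D - r * d`; once the progression is longer than `r`, the bound
`0 ≤ R < r` forces that difference to be `0`, so the colour is constant. Finally, of the `r` colours,
one must carry monochromatic progressions of every length, since that property is monotone in the length.
-/

open Filter Topology

def AdmitsFlatApprox (a : ℕ → ℕ) : Prop :=
  ∃ f : ℝ → ℝ, (∀ x : ℝ, 0 < x → DifferentiableAt ℝ f x) ∧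
    (∀ x : ℝ, 0 < x → DifferentiableAt ℝ (deriv f) x) ∧
    Tendsto (fun x => deriv (deriv f) x) atTop (𝓝 0) ∧
    ∃ C : ℝ, ∀ n : ℕ, |(a n : ℝ) - f n| ≤ C

lemma admitsFlatApprox_of_abs_sub_mul_le {a : ℕ → ℕ} {c B : ℝ}
    (h : ∀ n : ℕ, |(a n : ℝ) - c * n| ≤ B) : AdmitsFlatApprox a := by
  have hderiv : deriv (fun x : ℝ => c * x) = fun _ => c := by
    funext x
    simp
  refine ⟨fun x => c * x, fun x _ => by fun_prop, fun x _ => ?_, ?_, B, h⟩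
  · rw [hderiv]
    exact differentiableAt_const c
  · simp [hderiv]

lemma strictMono_mul_add_of_lt {r : ℕ} {R : ℕ → ℕ} (hR : ∀ n, R n < r) :
    StrictMono fun n => r * n + R n :=
  strictMono_nat_of_lt_succ fun n => by
    have := hR n
    rw [mul_add_one]
    omega

lemma abs_mul_add_sub_mul_le {r : ℕ} {R : ℕ → ℕ} (hR : ∀ n, R n < r) (n : ℕ) :
    |((r * n + R n : ℕ) : ℝ) - r * n| ≤ r := by
  push_cast
  rw [add_sub_cancel_left, abs_of_nonneg (Nat.cast_nonneg _)]
  exact_mod_cast (hR n).le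

lemma Int.eq_zero_of_mem_Ico_of_add_mul_mem_Ico {r x c : ℤ} (hx : x ∈ Set.Ico 0 r)
    (hxc : x + r * c ∈ Set.Ico 0 r) : c = 0 := by
  obtain ⟨hx₀, hxr⟩ := hx
  obtain ⟨hxc₀, hxcr⟩ := hxc
  rcases lt_trichotomy c 0 with hc | hc | hc <;> nlinarith

lemma apply_eq_of_graph_ap {r : ℕ} {R : ℕ → ℕ} (hR : ∀ n, R n < r) {K e d D : ℕ} (hK : r < K)
    (hstep : ∀ j, j + 1 < K →
      r * (e + (j + 1) * d) + R (e + (j + 1) * d) = r * (e + j * d) + R (e + j * d) + D) :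
    ∀ i < K, R (e + i * d) = R e := by
  set c : ℤ := D - r * d
  have hlin : ∀ i < K, (R (e + i * d) : ℤ) = R e + i * c := by
    intro i
    induction i with
    | zero => simp
    | succ i ih =>
      intro hi
      have hstepℤ : ((r * (e + (i + 1) * d) + R (e + (i + 1) * d) : ℕ) : ℤ)
          = ((r * (e + i * d) + R (e + i * d) + D : ℕ) : ℤ) := congrArg _ (hstep i hi)
      push_cast at hstepℤ ⊢
      linear_combination ih (by omega) + hstepℤ
  have hc : c = 0 := Int.eq_zero_of_mem_Ico_of_add_mul_mem_Ico (r := r) (x := R e)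
    ⟨by positivity, by exact_mod_cast hR e⟩
    (hlin r hK ▸ ⟨by positivity, by exact_mod_cast hR _⟩)
  intro i hi
  have := hlin i hi
  rw [hc, mul_zero, add_zero] at this
  exact_mod_cast this

lemma exists_forall_of_forall_exists_of_antitone {r : ℕ} {P : ℕ → ℕ → Prop}
    (hP : ∀ j, Antitone (P j)) (h : ∀ k, ∃ j < r, P j k) : ∃ j < r, ∀ k, P j k := by
  by_contra! hne
  have hev : ∀ᶠ k in atTop, ∀ j ∈ {j | j < r}, ¬P j k := by
    refine (eventually_all_finite (Set.finite_lt_nat r)).2 fun j hj => ?_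
    obtain ⟨k, hk⟩ := hne j hj
    exact eventually_atTop.2 ⟨k, fun k' hk' hPk' => hk (hP j hk' hPk')⟩
  obtain ⟨k, hk⟩ := hev.exists
  obtain ⟨j, hj, hPj⟩ := h k
  exact hk j hj hPj

theorem stmt_15_general
    (H : ∀ a : ℕ → ℕ, StrictMono a →
      (∃ f : ℝ → ℝ, (∀ x : ℝ, 0 < x → DifferentiableAt ℝ f x) ∧
        (∀ x : ℝ, 0 < x → DifferentiableAt ℝ (deriv f) x) ∧
        Filter.Tendsto (fun x => deriv (deriv f) x) Filter.atTop (nhds 0) ∧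
        ∃ C : ℝ, ∀ n : ℕ, |(a n : ℝ) - f n| ≤ C) →
      ∀ k : ℕ, 3 ≤ k → ∃ e d : ℕ, 0 < e ∧ 0 < d ∧ ∃ D : ℕ, 0 < D ∧
        ∀ j, j + 1 < k → a (e + (j + 1) * d) = a (e + j * d) + D)
    (r : ℕ) (C : ℕ → Set ℕ)
    (hcover : ∀ n : ℕ, ∃ j, j < r ∧ n ∈ C j) :
    ∃ j, j < r ∧ ∀ k : ℕ, ∃ e d : ℕ, 0 < d ∧ ∀ i, i < k → e + i * d ∈ C j := by
  choose R hRlt hRmem using hcover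
  have hmono : ∀ k, ∃ j < r, ∃ e d : ℕ, 0 < d ∧ ∀ i < k, e + i * d ∈ C j := by
    intro k
    obtain ⟨e, d, -, hd, D, -, hstep⟩ := H (fun n => r * n + R n) (strictMono_mul_add_of_lt hRlt)
      (admitsFlatApprox_of_abs_sub_mul_le (abs_mul_add_sub_mul_le hRlt)) (k + r + 3) (by omega)
    have hconst := apply_eq_of_graph_ap hRlt (by omega : r < k + r + 3) hstep
    exact ⟨R e, hRlt e, e, d, hd, fun i hi => hconst i (by omega) ▸ hRmem _⟩
  exact exists_forall_of_forall_exists_of_antitone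
    (fun j k k' hkk' ⟨e, d, hd, hap⟩ => ⟨e, d, hd, fun i hi => hap i (by omega)⟩) hmono

theorem stmt_15
    (H : ∀ a : ℕ → ℕ, StrictMono a →
      (∃ f : ℝ → ℝ, (∀ x : ℝ, 0 < x → DifferentiableAt ℝ f x) ∧
        (∀ x : ℝ, 0 < x → DifferentiableAt ℝ (deriv f) x) ∧
        Filter.Tendsto (fun x => deriv (deriv f) x) Filter.atTop (nhds 0) ∧
        ∃ C : ℝ, ∀ n : ℕ, |(a n : ℝ) - f n| ≤ C) →
      ∀ k : ℕ, 3 ≤ k → ∃ e d : ℕ, 0 < e ∧ 0 < d ∧ ∃ D : ℕ, 0 < D ∧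
        ∀ j, j + 1 < k → a (e + (j + 1) * d) = a (e + j * d) + D)
    (r : ℕ) (hr : 0 < r) (C : ℕ → Set ℕ)
    (hcover : ∀ n : ℕ, ∃ j, j < r ∧ n ∈ C j)
    (hdisj : ∀ i j, i < r → j < r → i ≠ j → ∀ n, n ∈ C i → n ∉ C j) :
    ∃ j, j < r ∧ ∀ k : ℕ, ∃ e d : ℕ, 0 < d ∧ ∀ i, i < k → e + i * d ∈ C j :=
  stmt_15_general H r C hcover
end

section
/- Let F̃ : [0,∞) → [0,∞) be a continuous increasing bijection satisfying F̃(2x) ≥ 2F̃(x) for all x ≥ 0, and define h(x) = ∫₀ˣ F̃⁻¹(F̃⁻¹(y)) dy. Then h(2x) ≤ 4h(x) for all x ≥ 0, and consequently x·h'(x) ≤ 4h(x) for all x ≥ 0. -/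
theorem stmt_16 (F Finv : ℝ → ℝ)
    (hFc : ContinuousOn F (Set.Ici 0))
    (hFmono : StrictMonoOn F (Set.Ici 0))
    (hF0 : F 0 = 0)
    (hFsurj : ∀ y : ℝ, 0 ≤ y → ∃ x : ℝ, 0 ≤ x ∧ F x = y)
    (hinv1 : ∀ x : ℝ, 0 ≤ x → Finv (F x) = x)
    (hinv2 : ∀ y : ℝ, 0 ≤ y → 0 ≤ Finv y ∧ F (Finv y) = y)
    (hdouble : ∀ x : ℝ, 0 ≤ x → 2 * F x ≤ F (2 * x))
    (h : ℝ → ℝ) (hh : ∀ x : ℝ, h x = ∫ y in (0 : ℝ)..x, Finv (Finv y)) :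
    ∀ x : ℝ, 0 ≤ x → h (2 * x) ≤ 4 * h x ∧ x * Finv (Finv x) ≤ 4 * h x := by
  have hFinv_nonneg : ∀ y, 0 ≤ y → 0 ≤ Finv y := fun y hy => (hinv2 y hy).1
  have hFinv_mono : ∀ a b, 0 ≤ a → a ≤ b → Finv a ≤ Finv b := by
    intro a b ha hab
    by_contra hlt
    push_neg at hlt
    have h1 : F (Finv b) < F (Finv a) :=
      hFmono (Set.mem_Ici.mpr (hFinv_nonneg b (ha.trans hab)))
        (Set.mem_Ici.mpr (hFinv_nonneg a ha)) hlt
    rw [(hinv2 a ha).2, (hinv2 b (ha.trans hab)).2] at h1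
    linarith
  have hFinv_double : ∀ y, 0 ≤ y → Finv (2 * y) ≤ 2 * Finv y := by
    intro y hy
    have h2y : (0:ℝ) ≤ 2 * y := by linarith
    have hnn := hFinv_nonneg y hy
    have hle : F (Finv (2 * y)) ≤ F (2 * Finv y) := by
      rw [(hinv2 _ h2y).2]
      calc 2 * y = 2 * F (Finv y) := by rw [(hinv2 y hy).2]
        _ ≤ F (2 * Finv y) := hdouble _ hnn
    exact (hFmono.le_iff_le (Set.mem_Ici.mpr (hFinv_nonneg _ h2y))
      (Set.mem_Ici.mpr (by linarith))).mp hle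
  set g : ℝ → ℝ := fun y => Finv (Finv y) with hg
  have hg_nonneg : ∀ y, 0 ≤ y → 0 ≤ g y := fun y hy =>
    hFinv_nonneg _ (hFinv_nonneg y hy)
  have hg_mono : ∀ a b, 0 ≤ a → a ≤ b → g a ≤ g b := fun a b ha hab =>
    hFinv_mono _ _ (hFinv_nonneg a ha) (hFinv_mono a b ha hab)
  have hg_double : ∀ y, 0 ≤ y → g (2 * y) ≤ 2 * g y := by
    intro y hy
    calc g (2 * y) ≤ Finv (2 * Finv y) :=
          hFinv_mono _ _ (hFinv_nonneg _ (by linarith)) (hFinv_double y hy)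
      _ ≤ 2 * g y := hFinv_double _ (hFinv_nonneg y hy)
  -- integrability
  have hg_int : ∀ a b : ℝ, 0 ≤ a → a ≤ b → IntervalIntegrable g MeasureTheory.volume a b := by
    intro a b ha hab
    apply MonotoneOn.intervalIntegrable
    intro u hu v hv huv
    rw [Set.uIcc_of_le hab] at hu hv
    exact hg_mono u v (ha.trans hu.1) huv
  intro x hx
  have h2x : (0:ℝ) ≤ 2 * x := by linarith
  have hint0x := hg_int 0 x le_rfl hx
  have hint02x := hg_int 0 (2*x) le_rfl h2x
  have hintx2x := hg_int x (2*x) hx (by linarith)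
  have hint2u : IntervalIntegrable (fun u => g (2 * u)) MeasureTheory.volume 0 x := by
    apply MonotoneOn.intervalIntegrable
    intro u hu v hv huv
    rw [Set.uIcc_of_le hx] at hu hv
    exact hg_mono _ _ (by linarith [hu.1]) (by linarith)
  have key : h (2 * x) ≤ 4 * h x := by
    have hsub : (∫ y in (0:ℝ)..(2*x), g y) = 2 * ∫ u in (0:ℝ)..x, g (2 * u) := by
      have h0 := intervalIntegral.integral_comp_mul_left (a := (0:ℝ)) (b := x) g
        (c := (2:ℝ)) two_ne_zero
      rw [h0]
      norm_num
      ring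
    have hmono : ∫ u in (0:ℝ)..x, g (2 * u) ≤ ∫ u in (0:ℝ)..x, 2 * g u := by
      apply intervalIntegral.integral_mono_on hx hint2u (hint0x.const_mul 2)
      intro u hu
      exact hg_double u hu.1
    have h2 : ∫ u in (0:ℝ)..x, 2 * g u = 2 * ∫ u in (0:ℝ)..x, g u := by
      simp [intervalIntegral.integral_const_mul]
    rw [hh (2*x), hh x, hsub]
    rw [h2] at hmono
    linarith
  refine ⟨key, ?_⟩
  have h1 : x * g x ≤ ∫ y in x..(2*x), g y := by
    have hm := intervalIntegral.integral_mono_on (by linarith : x ≤ 2*x)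
      (intervalIntegrable_const (c := g x)) hintx2x
      (fun u hu => hg_mono x u hx hu.1)
    rw [intervalIntegral.integral_const, smul_eq_mul] at hm
    calc x * g x = (2*x - x) * g x := by ring
      _ ≤ _ := hm
  have h2 : (0:ℝ) ≤ ∫ y in (0:ℝ)..x, g y := by
    apply intervalIntegral.integral_nonneg hx
    intro u hu; exact hg_nonneg u hu.1
  have h3 : (∫ y in (0:ℝ)..(2*x), g y) = (∫ y in (0:ℝ)..x, g y) + ∫ y in x..(2*x), g y :=
    (intervalIntegral.integral_add_adjacent_intervals hint0x hintx2x).symm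
  have h4 : h (2 * x) = ∫ y in (0:ℝ)..(2*x), g y := hh (2*x)
  calc x * g x ≤ ∫ y in x..(2*x), g y := h1
    _ ≤ ∫ y in (0:ℝ)..(2*x), g y := by linarith
    _ = h (2 * x) := h4.symm
    _ ≤ 4 * h x := key
end

section
/- Let b > 1 and let A = {⌊p^{1/b}⌋ : p prime} ⊂ ℕ. Then A has positive upper density: limsup_{x→∞} |A ∩ [1,x]|/x ≥ (b-1)/(3b²) > 0, assuming the prime number theorem π(x) ∼ x/log x and the Montgomery–Vaughan bound that there exists y₀ > 0 with π(x+y) - π(x) ≤ 3y/log y for all x > 0 and y ≥ y₀. -/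
/-!
Let `f p = ⌊p ^ (1 / b)⌋₊`. The primes `p ≤ x ^ b` are mapped by `f` into `A ∩ [1, x]`, and the
fiber over `m` consists of primes in `[m ^ b, (m + 1) ^ b)`, an interval of length at most
`Y = b (x + 1) ^ (b - 1) + 1` by the mean value theorem. The Montgomery–Vaughan bound therefore
caps every fiber at `3 Y / log Y`, so `|A ∩ [1, x]| ≥ π(x ^ b) log Y / (3 Y)`. Since
`Y ≥ x ^ (b - 1)` we have `log Y ≥ (b - 1) log x`, and by the prime number theorem the right-hand
side, divided by `x`, tends to `(b - 1) / (3 b ^ 2)`.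
-/

/-- The number of primes `≤ x`. -/
noncomputable def primepi (x : ℝ) : ℕ := Set.ncard {p : ℕ | p.Prime ∧ (p : ℝ) ≤ x}

open Filter Finset Real Topology

def floorRoots (b : ℝ) : Set ℕ := {m | ∃ p : ℕ, p.Prime ∧ m = ⌊(p : ℝ) ^ (1 / b)⌋₊}

noncomputable def countUpTo (A : Set ℕ) (x : ℝ) : ℕ :=
  Set.ncard {m : ℕ | m ∈ A ∧ 1 ≤ m ∧ (m : ℝ) ≤ x}

lemma setOf_mem_le_subset_Icc (A : Set ℕ) (x : ℝ) :
    {m : ℕ | m ∈ A ∧ 1 ≤ m ∧ (m : ℝ) ≤ x} ⊆ Icc 1 ⌊x⌋₊ :=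
  fun _ ⟨_, h1, hx⟩ => mem_Icc.2 ⟨h1, Nat.le_floor hx⟩

lemma countUpTo_le (A : Set ℕ) {x : ℝ} (hx : 0 ≤ x) : (countUpTo A x : ℝ) ≤ x := by
  have h := Set.ncard_le_ncard (setOf_mem_le_subset_Icc A x) (finite_toSet _)
  rw [Set.ncard_coe_finset, Nat.card_Icc, Nat.add_sub_cancel] at h
  calc (countUpTo A x : ℝ) ≤ ⌊x⌋₊ := by exact_mod_cast h
    _ ≤ x := Nat.floor_le hx

lemma mem_primesLE_floor {x : ℝ} {p : ℕ} : p ∈ Nat.primesLE ⌊x⌋₊ ↔ p.Prime ∧ (p : ℝ) ≤ x := by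
  rw [Nat.mem_primesLE, and_comm]
  exact and_congr_right fun hp => Nat.le_floor_iff' hp.ne_zero

lemma primepi_eq_card_primesLE (x : ℝ) : primepi x = #(Nat.primesLE ⌊x⌋₊) := by
  rw [primepi, ← Set.ncard_coe_finset]
  congr 1
  ext p
  exact mem_primesLE_floor.symm

lemma card_filter_primesLE_lt {u v : ℝ} (huv : u ≤ v) :
    ((#{p ∈ Nat.primesLE ⌊v⌋₊ | u < ((p : ℕ) : ℝ)} : ℕ) : ℝ) = primepi v - primepi u := by
  have hle : {p ∈ Nat.primesLE ⌊v⌋₊ | ¬ u < ((p : ℕ) : ℝ)} = Nat.primesLE ⌊u⌋₊ := by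
    ext p
    simp only [mem_filter, mem_primesLE_floor, not_lt]
    exact ⟨fun ⟨⟨hp, _⟩, hpu⟩ => ⟨hp, hpu⟩, fun ⟨hp, hpu⟩ => ⟨⟨hp, hpu.trans huv⟩, hpu⟩⟩
  rw [primepi_eq_card_primesLE, primepi_eq_card_primesLE, ← hle,
    ← card_filter_add_card_filter_not (s := Nat.primesLE ⌊v⌋₊) (fun p : ℕ => u < (p : ℝ))]
  push_cast
  ring

lemma Finset.card_le_mul_card_image_of_le {α β R : Type*} [DecidableEq β] [CommSemiring R]
    [PartialOrder R] [IsOrderedRing R] {f : α → β} (s : Finset α) {B : R}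
    (h : ∀ b ∈ s.image f, (#{a ∈ s | f a = b} : R) ≤ B) : (#s : R) ≤ B * #(s.image f) := by
  rw [card_eq_sum_card_image f s, Nat.cast_sum, mul_comm, ← nsmul_eq_mul]
  exact sum_le_card_nsmul _ _ _ h

lemma floor_rpow_one_div_eq_iff {b t : ℝ} (hb : 0 < b) (ht : 0 ≤ t) {m : ℕ} :
    ⌊t ^ (1 / b)⌋₊ = m ↔ (m : ℝ) ^ b ≤ t ∧ t < ((m : ℝ) + 1) ^ b := by
  rw [one_div, Nat.floor_eq_iff (by positivity), le_rpow_inv_iff_of_pos (by positivity) ht hb,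
    rpow_inv_lt_iff_of_pos ht (by positivity) hb]

lemma rpow_add_one_sub_rpow_le {b a : ℝ} (hb : 1 ≤ b) (ha : 0 ≤ a) :
    (a + 1) ^ b - a ^ b ≤ b * (a + 1) ^ (b - 1) := by
  have ha1 : 0 < a + 1 := by linarith
  -- Bernoulli's inequality at `s = -1/(a+1)`, scaled by `(a+1)^b`
  have key := one_add_mul_self_le_rpow_one_add (s := -(a + 1)⁻¹)
    (by rw [neg_le_neg_iff]; exact inv_le_one_of_one_le₀ (by linarith)) hb
  have hs : 1 + -(a + 1)⁻¹ = a / (a + 1) := by field_simp; ring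
  rw [hs, div_rpow ha ha1.le, le_div_iff₀ (rpow_pos_of_pos ha1 b)] at key
  have hb1 : (a + 1) ^ b = (a + 1) ^ (b - 1) * (a + 1) := by
    rw [← rpow_add_one ha1.ne', sub_add_cancel]
  rw [hb1] at key ⊢
  field_simp at key
  linarith

lemma one_le_floor_rpow_one_div_and_le {b x t : ℝ} (hb : 0 < b) (hx : 0 ≤ x) (ht : 1 ≤ t)
    (htx : t ≤ x ^ b) : 1 ≤ ⌊t ^ (1 / b)⌋₊ ∧ (⌊t ^ (1 / b)⌋₊ : ℝ) ≤ x := by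
  refine ⟨Nat.one_le_floor_iff _ |>.2 (one_le_rpow ht (by positivity)), ?_⟩
  calc (⌊t ^ (1 / b)⌋₊ : ℝ) ≤ t ^ (1 / b) := Nat.floor_le (by positivity)
    _ ≤ (x ^ b) ^ (1 / b) := rpow_le_rpow (by linarith) htx (by positivity)
    _ = x := by rw [← rpow_mul hx, mul_one_div_cancel hb.ne', rpow_one]

lemma card_filter_floor_rpow_one_div_eq_le {b x Y B : ℝ} (hb : 1 ≤ b)
    (hY : b * (x + 1) ^ (b - 1) + 1 ≤ Y)
    (hB : ∀ u > 0, (primepi (u + Y) : ℝ) - primepi u ≤ B)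
    {s : Finset ℕ} (hs : ∀ p ∈ s, p.Prime) {m : ℕ} (hm : 1 ≤ m) (hmx : (m : ℝ) ≤ x) :
    ((#{p ∈ s | ⌊((p : ℕ) : ℝ) ^ (1 / b)⌋₊ = m} : ℕ) : ℝ) ≤ B := by
  have hb0 : 0 < b := by linarith
  -- the fiber lies in `[m ^ b, (m + 1) ^ b)`; shifting by `1 / 2` makes it a half-open interval
  -- `(u, u + Y]` with `u > 0`, as the short-interval bound requires
  set u := (m : ℝ) ^ b - 1 / 2 with hu_def
  have hu : 0 < u := by
    have : (1 : ℝ) ≤ (m : ℝ) ^ b := one_le_rpow (by exact_mod_cast hm) hb0.le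
    linarith
  have hx : 0 ≤ x := (Nat.cast_nonneg m).trans hmx
  have hY0 : 0 ≤ Y := by
    have : 0 ≤ b * (x + 1) ^ (b - 1) := by positivity
    linarith
  have hgap : ((m : ℝ) + 1) ^ b ≤ u + Y := by
    have h1 := rpow_add_one_sub_rpow_le hb (Nat.cast_nonneg m)
    have h2 : ((m : ℝ) + 1) ^ (b - 1) ≤ (x + 1) ^ (b - 1) :=
      rpow_le_rpow (by positivity) (by linarith) (by linarith)
    nlinarith [mul_le_mul_of_nonneg_left h2 hb0.le]
  have hsub : {p ∈ s | ⌊((p : ℕ) : ℝ) ^ (1 / b)⌋₊ = m} ⊆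
      {p ∈ Nat.primesLE ⌊u + Y⌋₊ | u < ((p : ℕ) : ℝ)} := by
    intro p hp
    obtain ⟨hps, hpm⟩ := mem_filter.1 hp
    obtain ⟨hlo, hhi⟩ := (floor_rpow_one_div_eq_iff hb0 p.cast_nonneg).1 hpm
    exact mem_filter.2 ⟨mem_primesLE_floor.2 ⟨hs p hps, by linarith⟩, by linarith⟩
  calc ((#{p ∈ s | ⌊((p : ℕ) : ℝ) ^ (1 / b)⌋₊ = m} : ℕ) : ℝ)
      ≤ (#{p ∈ Nat.primesLE ⌊u + Y⌋₊ | u < ((p : ℕ) : ℝ)} : ℕ) := by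
        exact_mod_cast card_le_card hsub
    _ = primepi (u + Y) - primepi u := card_filter_primesLE_lt (by linarith)
    _ ≤ B := hB u hu

theorem primepi_rpow_le_mul_countUpTo {b x Y B : ℝ} (hb : 1 ≤ b) (hx : 0 ≤ x)
    (hY : b * (x + 1) ^ (b - 1) + 1 ≤ Y)
    (hB : ∀ u > 0, (primepi (u + Y) : ℝ) - primepi u ≤ B) :
    (primepi (x ^ b) : ℝ) ≤ B * countUpTo (floorRoots b) x := by
  classical
  have hb0 : 0 < b := by linarith
  have hB0 : 0 ≤ B := by
    have hY0 : 0 ≤ Y := by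
      have : 0 ≤ b * (x + 1) ^ (b - 1) := by positivity
      linarith
    have h := hB 1 one_pos
    rw [← card_filter_primesLE_lt (by linarith)] at h
    exact h.trans' (Nat.cast_nonneg _)
  set P := Nat.primesLE ⌊x ^ b⌋₊
  set f : ℕ → ℕ := fun p => ⌊(p : ℝ) ^ (1 / b)⌋₊
  have hrange (p : ℕ) (hp : p ∈ P) : 1 ≤ f p ∧ (f p : ℝ) ≤ x :=
    have ⟨hpr, hpx⟩ := mem_primesLE_floor.1 hp
    one_le_floor_rpow_one_div_and_le hb0 hx (by exact_mod_cast hpr.one_lt.le) hpx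
  have himage : #(P.image f) ≤ countUpTo (floorRoots b) x := by
    rw [countUpTo, ← Set.ncard_coe_finset]
    refine Set.ncard_le_ncard ?_ ((finite_toSet _).subset (setOf_mem_le_subset_Icc _ _))
    intro m hm
    obtain ⟨p, hp, rfl⟩ := mem_image.1 hm
    exact ⟨⟨p, (mem_primesLE_floor.1 hp).1, rfl⟩, hrange p hp⟩
  have hfiber : ∀ m ∈ P.image f, ((#{p ∈ P | f p = m} : ℕ) : ℝ) ≤ B := by
    intro m hm
    obtain ⟨p, hp, rfl⟩ := mem_image.1 hm
    exact card_filter_floor_rpow_one_div_eq_le hb hY hB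
      (fun q hq => (mem_primesLE_floor.1 hq).1) (hrange p hp).1 (hrange p hp).2
  calc (primepi (x ^ b) : ℝ) = #P := by rw [primepi_eq_card_primesLE]
    _ ≤ B * #(P.image f) := card_le_mul_card_image_of_le P hfiber
    _ ≤ B * countUpTo (floorRoots b) x := by gcongr

lemma le_limsup_of_tendsto_of_eventually_le {α β : Type*} [ConditionallyCompleteLinearOrder β]
    [TopologicalSpace β] [OrderTopology β] {l : Filter α} [l.NeBot] {f g : α → β} {a : β}
    (hg : Tendsto g l (𝓝 a)) (hgf : g ≤ᶠ[l] f) (hf : IsBoundedUnder (· ≤ ·) l f) :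
    a ≤ limsup f l :=
  hg.limsup_eq ▸ limsup_le_limsup hgf hg.isBoundedUnder_ge.isCoboundedUnder_le hf

lemma tendsto_rpow_div_mul_add_one_rpow_add_one {b : ℝ} (hb : 1 < b) :
    Tendsto (fun x : ℝ => x ^ (b - 1) / (b * (x + 1) ^ (b - 1) + 1)) atTop (𝓝 b⁻¹) := by
  have hden : Tendsto (fun x : ℝ => b * (1 + x⁻¹) ^ (b - 1) + (x ^ (b - 1))⁻¹) atTop
      (𝓝 (b * (1 + 0) ^ (b - 1) + 0)) :=
    (((tendsto_const_nhds.add tendsto_inv_atTop_zero).rpow_const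
      (Or.inr (sub_nonneg.2 hb.le))).const_mul b).add
      (tendsto_rpow_atTop (sub_pos.2 hb)).inv_tendsto_atTop
  rw [add_zero, add_zero, one_rpow, mul_one] at hden
  refine (hden.inv₀ (by positivity)).congr' ?_
  filter_upwards [eventually_gt_atTop 0] with x hx
  have h1 : 1 + x⁻¹ = (x + 1) / x := by field_simp
  rw [h1, div_rpow (by positivity) hx.le]
  field_simp

lemma eventually_le_countUpTo_floorRoots_div {b y₀ : ℝ} (hb : 1 < b)
    (hMV : ∀ x : ℝ, 0 < x → ∀ y : ℝ, y₀ ≤ y →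
      ((primepi (x + y) : ℝ) - primepi x) ≤ 3 * y / log y) :
    ∀ᶠ x in atTop, primepi (x ^ b) * log (x ^ b) / x ^ b *
      (x ^ (b - 1) / (b * (x + 1) ^ (b - 1) + 1)) * ((b - 1) / (3 * b)) ≤
        countUpTo (floorRoots b) x / x := by
  have hb0 : 0 < b := by linarith
  have hY : Tendsto (fun x : ℝ => b * (x + 1) ^ (b - 1) + 1) atTop atTop :=
    tendsto_atTop_add_const_right _ 1 <| ((tendsto_rpow_atTop (sub_pos.2 hb)).comp
      (tendsto_atTop_add_const_right _ 1 tendsto_id)).const_mul_atTop hb0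
  filter_upwards [eventually_gt_atTop 0, hY.eventually_ge_atTop y₀] with x hx hy₀
  set Y := b * (x + 1) ^ (b - 1) + 1 with hY_def
  have hxY : x ^ (b - 1) ≤ Y := by
    have h1 : x ^ (b - 1) ≤ (x + 1) ^ (b - 1) := rpow_le_rpow hx.le (by linarith) (by linarith)
    have h2 : 0 ≤ (x + 1) ^ (b - 1) := by positivity
    nlinarith
  have hlogY : 0 < log Y := by
    have : 0 < b * (x + 1) ^ (b - 1) := by positivity
    exact log_pos (by linarith)
  have hcount := primepi_rpow_le_mul_countUpTo hb.le hx.le le_rfl (fun u hu => hMV u hu Y hy₀)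
  rw [div_mul_eq_mul_div, le_div_iff₀ hlogY] at hcount
  have hlog : (b - 1) * log x ≤ log Y := by
    rw [← log_rpow hx]
    exact log_le_log (by positivity) hxY
  have hxb : x ^ b = x ^ (b - 1) * x := by rw [← rpow_add_one hx.ne', sub_add_cancel]
  calc primepi (x ^ b) * log (x ^ b) / x ^ b * (x ^ (b - 1) / Y) * ((b - 1) / (3 * b))
      = primepi (x ^ b) * ((b - 1) * log x) / (3 * Y) / x := by
        rw [log_rpow hx, hxb]
        field_simp
    _ ≤ primepi (x ^ b) * log Y / (3 * Y) / x := by gcongr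
    _ ≤ countUpTo (floorRoots b) x / x := by
        gcongr
        rw [div_le_iff₀ (by positivity)]
        linarith

theorem stmt_17 (b : ℝ) (hb : 1 < b)
    (hPNT : Filter.Tendsto (fun x : ℝ => (primepi x : ℝ) * Real.log x / x)
      Filter.atTop (nhds 1))
    (hMV : ∃ y₀ : ℝ, 0 < y₀ ∧ ∀ x : ℝ, 0 < x → ∀ y : ℝ, y₀ ≤ y →
      ((primepi (x + y) : ℝ) - primepi x) ≤ 3 * y / Real.log y) :
    (b - 1) / (3 * b ^ 2) ≤ Filter.limsup (fun x : ℝ =>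
      (Set.ncard {m : ℕ | (∃ p : ℕ, p.Prime ∧ m = ⌊(p : ℝ) ^ (1 / b)⌋₊) ∧
        1 ≤ m ∧ (m : ℝ) ≤ x} : ℝ) / x) Filter.atTop ∧
    0 < (b - 1) / (3 * b ^ 2) := by
  have hb0 : 0 < b := by linarith
  refine ⟨?_, div_pos (sub_pos.2 hb) (by positivity)⟩
  obtain ⟨y₀, -, hMV⟩ := hMV
  have hlim := ((hPNT.comp (tendsto_rpow_atTop hb0)).mul
    (tendsto_rpow_div_mul_add_one_rpow_add_one hb)).mul_const ((b - 1) / (3 * b))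
  have hdensity_le_one : ∀ᶠ x in atTop, (countUpTo (floorRoots b) x : ℝ) / x ≤ 1 := by
    filter_upwards [eventually_gt_atTop 0] with x hx
    exact (div_le_one hx).2 (countUpTo_le _ hx.le)
  rw [show (b - 1) / (3 * b ^ 2) = 1 * b⁻¹ * ((b - 1) / (3 * b)) by field_simp]
  exact le_limsup_of_tendsto_of_eventually_le hlim (eventually_le_countUpTo_floorRoots_div hb hMV)
    (isBoundedUnder_of_eventually_le hdensity_le_one)
end
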